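/- arXiv:1012.5636 — 8 statements merged into one kernel-verified Lean document; each statement's English description precedes it below -/
import Mathlib

section
/- Let x¹, x², x³ and y¹, y², y³ be points in the Euclidean plane ℝ² with ‖xⁱ − xʲ‖ ≥ ‖yⁱ − yʲ‖ for all i, j. Then there exists a 1-Lipschitz map φ : ℝ² → ℝ² with φ(xⁱ) = yⁱ for i = 1, 2, 3. -/
open Set Metric

/-!
A short map defined on a set extends to the whole space (Kirszbraun). Viewing partial short maps
as sets of pairs, Zorn's lemma gives a maximal one, and it is total: adding a point `p` needs a
common point of the closed balls around the values `f a` of radii `dist p a`. Balls being compact,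
finitely many balls suffice. For those, minimise `max_i (‖z - qᵢ‖² - ‖p - pᵢ‖²)` over the convex
hull of the centres; the minimiser `z` lies in the convex hull of the active centres (otherwise,
moving towards its nearest point there lowers every active term), say `z = ∑ wᵢ qᵢ`. The identity
`∑ wᵢ ‖vᵢ - c‖² = ½ ∑ wᵢ wⱼ ‖vᵢ - vⱼ‖² + ‖c - ∑ wᵢ vᵢ‖²`, applied to the `qᵢ` and to the `pᵢ`, gives
`∑ wᵢ ‖z - qᵢ‖² ≤ ∑ wᵢ ‖p - pᵢ‖²`, so the minimum is `≤ 0`.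
-/

section Kirszbraun

variable {ι E F : Type*} [NormedAddCommGroup E] [InnerProductSpace ℝ E]
  [NormedAddCommGroup F] [InnerProductSpace ℝ F]

open Finset in
theorem Finset.sum_mul_norm_sub_sq_eq (t : Finset ι) (w : ι → ℝ) (v : ι → E)
    (hw : ∑ i ∈ t, w i = 1) (c : E) :
    ∑ i ∈ t, w i * ‖v i - c‖ ^ 2 =
      (∑ i ∈ t, ∑ j ∈ t, w i * w j * ‖v i - v j‖ ^ 2) / 2 + ‖c - ∑ i ∈ t, w i • v i‖ ^ 2 := by
  set u : ι → E := fun i => v i - c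
  have hdiff : ∀ i j, v i - v j = u i - u j := fun i j => by simp [u]
  have hbar : c - ∑ i ∈ t, w i • v i = -∑ i ∈ t, w i • u i := by
    simp only [u, smul_sub, sum_sub_distrib, ← sum_smul, hw, one_smul]; abel
  have hsq : ‖∑ i ∈ t, w i • u i‖ ^ 2 = ∑ i ∈ t, ∑ j ∈ t, w i * w j * inner ℝ (u i) (u j) := by
    rw [← real_inner_self_eq_norm_sq, sum_inner]
    simp only [inner_sum, real_inner_smul_left, real_inner_smul_right]
    exact sum_congr rfl fun i _ => sum_congr rfl fun j _ => by ring
  have hexp : ∀ i j, w i * w j * ‖u i - u j‖ ^ 2 =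
      w i * ‖u i‖ ^ 2 * w j + w i * (w j * ‖u j‖ ^ 2) - 2 * (w i * w j * inner ℝ (u i) (u j)) :=
    fun i j => by rw [norm_sub_sq_real]; ring
  simp only [hdiff, hbar, norm_neg, hsq, hexp, sum_add_distrib, sum_sub_distrib, ← mul_sum,
    ← sum_mul, hw]
  ring

open Finset in
theorem Finset.sum_mul_dist_sum_smul_sq_le {t : Finset ι} {w : ι → ℝ} (hw₀ : ∀ i ∈ t, 0 ≤ w i)
    (hw₁ : ∑ i ∈ t, w i = 1) {ps : ι → E} {qs : ι → F}
    (h : ∀ i ∈ t, ∀ j ∈ t, dist (qs i) (qs j) ≤ dist (ps i) (ps j)) (p : E) :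
    ∑ i ∈ t, w i * dist (∑ j ∈ t, w j • qs j) (qs i) ^ 2 ≤ ∑ i ∈ t, w i * dist p (ps i) ^ 2 := by
  have hq := t.sum_mul_norm_sub_sq_eq w qs hw₁ (∑ j ∈ t, w j • qs j)
  have hp := t.sum_mul_norm_sub_sq_eq w ps hw₁ p
  simp only [sub_self, norm_zero] at hq
  have hpair : ∑ i ∈ t, ∑ j ∈ t, w i * w j * ‖qs i - qs j‖ ^ 2 ≤
      ∑ i ∈ t, ∑ j ∈ t, w i * w j * ‖ps i - ps j‖ ^ 2 := by
    refine sum_le_sum fun i hi => sum_le_sum fun j hj => ?_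
    simp only [← dist_eq_norm]
    gcongr
    · exact mul_nonneg (hw₀ i hi) (hw₀ j hj)
    · exact h i hi j hj
  simp only [dist_comm _ (qs _), dist_comm p, dist_eq_norm]
  nlinarith [sq_nonneg ‖p - ∑ i ∈ t, w i • ps i‖]

theorem exists_dist_le_of_mem_convexHull {ps : ι → E} {qs : ι → F}
    (h : ∀ i j, dist (qs i) (qs j) ≤ dist (ps i) (ps j)) {z : F}
    (hz : z ∈ convexHull ℝ (range qs)) (p : E) : ∃ i, dist z (qs i) ≤ dist p (ps i) := by
  rw [convexHull_range_eq_exists_affineCombination] at hz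
  obtain ⟨t, w, hw₀, hw₁, rfl⟩ := hz
  rw [Finset.affineCombination_eq_linear_combination _ _ _ hw₁]
  by_contra! hlt
  obtain ⟨i, hi, hwi⟩ : ∃ i ∈ t, 0 < w i :=
    Finset.exists_lt_of_sum_lt (by simp [hw₁])
  refine (Finset.sum_mul_dist_sum_smul_sq_le hw₀ hw₁ (fun i _ j _ => h i j) p).not_gt
    (Finset.sum_lt_sum (fun j hj => ?_) ⟨i, hi, ?_⟩)
  · exact mul_le_mul_of_nonneg_left (pow_le_pow_left₀ dist_nonneg (hlt j).le 2) (hw₀ j hj)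
  · exact mul_lt_mul_of_pos_left (pow_lt_pow_left₀ (hlt i) dist_nonneg two_ne_zero) hwi

theorem dist_add_smul_sub_lt {z w u : F} (hu : inner ℝ (z - w) (u - w) ≤ 0) (hzw : z ≠ w)
    {t : ℝ} (ht : t ∈ Ioc 0 1) : dist (z + t • (w - z)) u < dist z u := by
  have hd : 0 < ‖z - w‖ := norm_pos_iff.2 (sub_ne_zero.2 hzw)
  have hexp : ‖z + t • (w - z) - u‖ ^ 2 =
      ‖z - u‖ ^ 2 - 2 * t * (‖z - w‖ ^ 2 - inner ℝ (z - w) (u - w)) + t ^ 2 * ‖z - w‖ ^ 2 := by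
    have hinner : inner ℝ (z - u) (z - w) = ‖z - w‖ ^ 2 - inner ℝ (z - w) (u - w) := by
      rw [show z - u = (z - w) - (u - w) by abel, inner_sub_left, real_inner_self_eq_norm_sq,
        real_inner_comm]
    rw [show z + t • (w - z) - u = (z - u) - t • (z - w) by module, norm_sub_sq_real, norm_smul,
      inner_smul_right, hinner, mul_pow, Real.norm_eq_abs, sq_abs]
    ring
  rw [dist_eq_norm, dist_eq_norm, ← pow_lt_pow_iff_left₀ (norm_nonneg _) (norm_nonneg _)
    two_ne_zero, hexp]
  nlinarith [ht.1, ht.2, mul_pos ht.1 (mul_pos hd hd)]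

open Filter Topology in
theorem mem_convexHull_of_isMinOn_sup' {s : Finset ι} (hs : s.Nonempty) {q : ι → F} {r : ι → ℝ}
    {K : Set F} (hK : Convex ℝ K) (hqK : ∀ i ∈ s, q i ∈ K) {z : F} (hz : z ∈ K)
    (hmin : IsMinOn (fun y => s.sup' hs fun i => dist y (q i) ^ 2 - r i) K z) :
    z ∈ convexHull ℝ
      (q '' {i | i ∈ s ∧ dist z (q i) ^ 2 - r i = s.sup' hs fun i => dist z (q i) ^ 2 - r i}) := by
  set g : F → ℝ := fun y => s.sup' hs fun i => dist y (q i) ^ 2 - r i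
  set A := {i | i ∈ s ∧ dist z (q i) ^ 2 - r i = g z}
  by_contra hzA
  have hAne : A.Nonempty :=
    let ⟨i, hi, he⟩ := Finset.exists_mem_eq_sup' hs fun i => dist z (q i) ^ 2 - r i
    ⟨i, hi, he.symm⟩
  have hC : IsCompact (convexHull ℝ (q '' A)) :=
    ((s.finite_toSet.subset fun _ hi => hi.1).image q).isCompact_convexHull ℝ
  obtain ⟨w, hwC, hw⟩ := exists_norm_eq_iInf_of_complete_convex (hAne.image q).convexHull
    hC.isComplete (convex_convexHull ℝ _) z
  have hproj := (norm_eq_iInf_iff_real_inner_le_zero (convex_convexHull ℝ _) hwC).1 hw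
  have hwK : w ∈ K := convexHull_min (image_subset_iff.2 fun i hi => hqK i hi.1) hK hwC
  have hzw : z ≠ w := fun h => hzA (h ▸ hwC)
  have hIoc : Ioc (0 : ℝ) 1 ∈ 𝓝[>] 0 := Ioc_mem_nhdsGT one_pos
  have hmemK : ∀ᶠ t in 𝓝[>] (0 : ℝ), z + t • (w - z) ∈ K :=
    mem_of_superset hIoc fun t ht => hK.add_smul_sub_mem hz hwK (Ioc_subset_Icc_self ht)
  have hdesc : ∀ᶠ t in 𝓝[>] (0 : ℝ), g (z + t • (w - z)) < g z := by
    simp only [g, Finset.sup'_lt_iff]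
    refine (eventually_all_finset s).2 fun i hi => ?_
    by_cases hiA : i ∈ A
    · filter_upwards [hIoc] with t ht
      have := dist_add_smul_sub_lt (hproj _ (subset_convexHull ℝ _ ⟨i, hiA, rfl⟩)) hzw ht
      exact lt_of_lt_of_eq (by gcongr) hiA.2
    · have hlt : dist z (q i) ^ 2 - r i < g z :=
        (Finset.le_sup' (fun i => dist z (q i) ^ 2 - r i) hi).lt_of_ne fun h => hiA ⟨hi, h⟩
      have hcont : Continuous fun t : ℝ => dist (z + t • (w - z)) (q i) ^ 2 - r i := by fun_prop
      exact nhdsWithin_le_nhds ((hcont.tendsto' 0 _ (by simp)).eventually_lt_const hlt)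
  obtain ⟨t, hlt, htK⟩ := (hdesc.and hmemK).exists
  exact (isMinOn_iff.1 hmin _ htK).not_gt hlt

theorem exists_forall_dist_le_of_finset {s : Finset ι} (hs : s.Nonempty) {ps : ι → E}
    {qs : ι → F} (h : ∀ i ∈ s, ∀ j ∈ s, dist (qs i) (qs j) ≤ dist (ps i) (ps j)) (p : E) :
    ∃ z, ∀ i ∈ s, dist z (qs i) ≤ dist p (ps i) := by
  set f : ι → F → ℝ := fun i y => dist y (qs i) ^ 2 - dist p (ps i) ^ 2
  have hcont : Continuous fun y => s.sup' hs fun i => f i y :=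
    Continuous.finset_sup'_apply hs fun i _ => by fun_prop
  obtain ⟨z, hzK, hmin⟩ := ((s.finite_toSet.image qs).isCompact_convexHull ℝ).exists_isMinOn
    ((Finset.coe_nonempty.2 hs).image qs).convexHull hcont.continuousOn
  have hzA := mem_convexHull_of_isMinOn_sup' hs (convex_convexHull ℝ _)
    (fun i hi => subset_convexHull ℝ _ (mem_image_of_mem qs hi)) hzK hmin
  rw [image_eq_range] at hzA
  obtain ⟨⟨i, -, hi_max⟩, hi : dist z (qs i) ≤ dist p (ps i)⟩ :=
    exists_dist_le_of_mem_convexHull (ps := ps ∘ Subtype.val) (fun a b => h a a.2.1 b b.2.1) hzA p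
  have hmax_nonpos : (s.sup' hs fun i => f i z) ≤ 0 :=
    hi_max ▸ sub_nonpos.2 (pow_le_pow_left₀ dist_nonneg hi 2)
  refine ⟨z, fun j hj => ?_⟩
  have := (Finset.le_sup' (fun i => f i z) hj).trans hmax_nonpos
  exact (pow_le_pow_iff_left₀ dist_nonneg dist_nonneg two_ne_zero).1 (sub_nonpos.1 this)

theorem exists_forall_dist_le [ProperSpace F] {ps : ι → E} {qs : ι → F}
    (h : ∀ i j, dist (qs i) (qs j) ≤ dist (ps i) (ps j)) (p : E) :
    ∃ z, ∀ i, dist z (qs i) ≤ dist p (ps i) := by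
  classical
  rcases isEmpty_or_nonempty ι with _ | ⟨⟨i₀⟩⟩
  · exact ⟨0, isEmptyElim⟩
  obtain ⟨z, -, hz⟩ := (isCompact_closedBall (qs i₀) (dist p (ps i₀))).inter_iInter_nonempty
    (fun i => closedBall (qs i) (dist p (ps i))) (fun _ => isClosed_closedBall) fun u => by
      obtain ⟨z, hz⟩ := exists_forall_dist_le_of_finset (Finset.insert_nonempty i₀ u)
        (fun i _ j _ => h i j) p
      exact ⟨z, hz i₀ (Finset.mem_insert_self _ _),
        mem_iInter₂.2 fun i hi => hz i (Finset.mem_insert_of_mem hi)⟩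
  exact ⟨z, fun i => mem_iInter.1 hz i⟩

theorem exists_lipschitzWith_one_extension [ProperSpace F] (ps : ι → E) (qs : ι → F)
    (h : ∀ i j, dist (qs i) (qs j) ≤ dist (ps i) (ps j)) :
    ∃ φ : E → F, LipschitzWith 1 φ ∧ ∀ i, φ (ps i) = qs i := by
  set Short : Set (Set (E × F)) := {G | ∀ a ∈ G, ∀ b ∈ G, dist a.2 b.2 ≤ dist a.1 b.1}
  have hchain : ∀ c ⊆ Short, IsChain (· ⊆ ·) c → c.Nonempty → ∃ ub ∈ Short, ∀ G ∈ c, G ⊆ ub := by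
    refine fun c hc hchain _ => ⟨⋃₀ c, ?_, fun _ => subset_sUnion_of_mem⟩
    rintro a ⟨G, hG, ha⟩ b ⟨G', hG', hb⟩
    rcases hchain.total hG hG' with hGG' | hG'G
    exacts [hc hG' _ (hGG' ha) _ hb, hc hG _ ha _ (hG'G hb)]
  obtain ⟨M, hM₀, hM⟩ := zorn_subset_nonempty Short hchain (range fun i => (ps i, qs i))
    (by rintro _ ⟨i, rfl⟩ _ ⟨j, rfl⟩; exact h i j)
  have hMshort : M ∈ Short := hM.prop
  have htotal : ∀ p, ∃ z, (p, z) ∈ M := fun p => by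
    obtain ⟨z, hz⟩ := exists_forall_dist_le (ps := fun a : M => a.1.1) (qs := fun a : M => a.1.2)
      (fun a b => hMshort _ a.2 _ b.2) p
    have hins : insert (p, z) M ∈ Short := by
      rintro a (rfl | ha) b (rfl | hb)
      · simp
      · exact hz ⟨b, hb⟩
      · rw [dist_comm, dist_comm a.1]; exact hz ⟨a, ha⟩
      · exact hMshort a ha b hb
    exact ⟨z, (hM.eq_of_subset hins (subset_insert _ _)).symm ▸ mem_insert _ _⟩
  choose φ hφ using htotal
  have hφ_eq : ∀ a ∈ M, φ a.1 = a.2 := fun a ha =>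
    dist_le_zero.1 (by simpa using hMshort _ (hφ a.1) a ha)
  exact ⟨φ, LipschitzWith.of_dist_le_mul fun a b => by simpa using hMshort _ (hφ a) _ (hφ b),
    fun i => hφ_eq _ (hM₀ ⟨i, rfl⟩)⟩

end Kirszbraun

theorem short_map_three_points_plane
    (x y : Fin 3 → EuclideanSpace ℝ (Fin 2))
    (h : ∀ i j, dist (y i) (y j) ≤ dist (x i) (x j)) :
    ∃ φ : EuclideanSpace ℝ (Fin 2) → EuclideanSpace ℝ (Fin 2),
      LipschitzWith 1 φ ∧ ∀ i, φ (x i) = y i :=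
  exists_lipschitzWith_one_extension x y h
end

section
/- Let x¹, x², x³, p be points in ℝⁿ and let x̃¹, x̃², x̃³ be points in ℝ² such that ‖x̃ⁱ − x̃ʲ‖ ≤ ‖xⁱ − xʲ‖ for all i, j. Then there exists a point p̃ ∈ ℝ² such that ‖p̃ − x̃ⁱ‖ ≤ ‖p − xⁱ‖ for i = 1, 2, 3. -/
/-!
Minimize over `q` the largest power `‖y i - q‖² - ‖x i - p‖²` of `q` with respect to the spheres
about the image points. At a minimizer `q` no direction decreases all active powers at once, so
`q` is a convex combination `∑ wᵢ yᵢ` of the active points `yᵢ`. Averaging with the weights `wᵢ`,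
the maximal power is `∑ wᵢ ‖yᵢ - q‖² - ∑ wᵢ ‖xᵢ - p‖²`. Both weighted variances are half the
weighted sum of the pairwise squared distances, so the first is at most `∑ wᵢ ‖xᵢ - x̄‖²` with
`x̄ = ∑ wᵢ xᵢ`, which in turn is at most `∑ wᵢ ‖xᵢ - p‖²` since the barycenter minimizes the
weighted sum of squared distances. Hence all powers at `q` are nonpositive.
-/

open Filter Topology

open scoped RealInnerProductSpace

section Variance

variable {ι E : Type*} [Fintype ι] [NormedAddCommGroup E] [InnerProductSpace ℝ E]

theorem sum_mul_norm_sub_sq_eq_add {w : ι → ℝ} (hw : ∑ i, w i = 1) (y : ι → E) (q : E) :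
    ∑ i, w i * ‖y i - q‖ ^ 2
      = ∑ i, w i * ‖y i - ∑ j, w j • y j‖ ^ 2 + ‖∑ j, w j • y j - q‖ ^ 2 := by
  set c := ∑ j, w j • y j
  have hdev : ∑ i, w i • (y i - c) = 0 := by
    simp only [smul_sub, Finset.sum_sub_distrib, ← Finset.sum_smul, hw, one_smul, c, sub_self]
  have hterm : ∀ i, w i * ‖y i - q‖ ^ 2
      = w i * ‖y i - c‖ ^ 2 + 2 * ⟪w i • (y i - c), c - q⟫ + w i * ‖c - q‖ ^ 2 := fun i => by
    rw [← sub_add_sub_cancel (y i) c q, norm_add_sq_real, real_inner_smul_left]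
    ring
  simp only [hterm, Finset.sum_add_distrib, ← Finset.mul_sum, ← sum_inner, hdev, inner_zero_left,
    ← Finset.sum_mul, hw]
  ring

theorem sum_sum_mul_norm_sub_sq_eq {w : ι → ℝ} (hw : ∑ i, w i = 1) (y : ι → E) :
    ∑ i, ∑ j, w i * w j * ‖y j - y i‖ ^ 2 = 2 * ∑ i, w i * ‖y i - ∑ j, w j • y j‖ ^ 2 := by
  set V := ∑ i, w i * ‖y i - ∑ j, w j • y j‖ ^ 2
  calc ∑ i, ∑ j, w i * w j * ‖y j - y i‖ ^ 2
      = ∑ i, w i * (V + ‖∑ j, w j • y j - y i‖ ^ 2) := by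
        refine Finset.sum_congr rfl fun i _ => ?_
        rw [← sum_mul_norm_sub_sq_eq_add hw, Finset.mul_sum]
        exact Finset.sum_congr rfl fun j _ => by ring
    _ = 2 * V := by
        simp only [mul_add, Finset.sum_add_distrib, ← Finset.sum_mul, hw, norm_sub_rev _ (y _), V]
        ring

variable {F : Type*} [NormedAddCommGroup F] [InnerProductSpace ℝ F]

theorem sum_mul_norm_sub_sum_smul_sq_le {w : ι → ℝ} (hw₀ : ∀ i, 0 ≤ w i) (hw₁ : ∑ i, w i = 1)
    {x : ι → E} {y : ι → F} (h : ∀ i j, ‖y i - y j‖ ≤ ‖x i - x j‖) (p : E) :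
    ∑ i, w i * ‖y i - ∑ j, w j • y j‖ ^ 2 ≤ ∑ i, w i * ‖x i - p‖ ^ 2 := by
  have hpair : ∑ i, ∑ j, w i * w j * ‖y j - y i‖ ^ 2 ≤ ∑ i, ∑ j, w i * w j * ‖x j - x i‖ ^ 2 :=
    Finset.sum_le_sum fun i _ => Finset.sum_le_sum fun j _ =>
      mul_le_mul_of_nonneg_left (pow_le_pow_left₀ (norm_nonneg _) (h j i) 2)
        (mul_nonneg (hw₀ i) (hw₀ j))
  rw [sum_sum_mul_norm_sub_sq_eq hw₁, sum_sum_mul_norm_sub_sq_eq hw₁] at hpair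
  rw [sum_mul_norm_sub_sq_eq_add hw₁ x p]
  nlinarith [sq_nonneg ‖∑ j, w j • x j - p‖]

end Variance

theorem exists_weights_of_mem_convexHull_image {ι R E : Type*} [Fintype ι] [Field R]
    [LinearOrder R] [IsStrictOrderedRing R] [AddCommGroup E] [Module R E] {s : Set ι} {v : ι → E}
    {x : E} (hx : x ∈ convexHull R (v '' s)) :
    ∃ w : ι → R, (∀ i, 0 ≤ w i) ∧ (∀ i ∉ s, w i = 0) ∧ ∑ i, w i = 1 ∧ ∑ i, w i • v i = x := by
  classical
  refine convexHull_min (t := {x | ∃ w : ι → R, (∀ i, 0 ≤ w i) ∧ (∀ i ∉ s, w i = 0) ∧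
    ∑ i, w i = 1 ∧ ∑ i, w i • v i = x}) ?_ ?_ hx
  · rintro _ ⟨i, hi, rfl⟩
    refine ⟨Pi.single i 1, fun j => ?_, fun j hj => ?_, by simp, by simp [Pi.single_apply]⟩
    · by_cases hj : j = i <;> simp [hj]
    · simp [show j ≠ i by rintro rfl; exact hj hi]
  · rintro _ ⟨w, hw₀, hws, hw₁, rfl⟩ _ ⟨w', hw₀', hws', hw₁', rfl⟩ a b ha hb hab
    refine ⟨a • w + b • w', fun i => ?_, fun i hi => ?_, ?_, ?_⟩
    · simp only [Pi.add_apply, Pi.smul_apply, smul_eq_mul]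
      exact add_nonneg (mul_nonneg ha (hw₀ i)) (mul_nonneg hb (hw₀' i))
    · simp [hws i hi, hws' i hi]
    · simp [Finset.sum_add_distrib, ← Finset.mul_sum, hw₁, hw₁', hab]
    · simp [Finset.sum_add_distrib, add_smul, mul_smul, ← Finset.smul_sum]

theorem eventually_norm_sub_add_smul_sq_lt {E : Type*} [NormedAddCommGroup E]
    [InnerProductSpace ℝ E] {a q v : E} (h : 0 < ⟪a - q, v⟫) :
    ∀ᶠ t in 𝓝[>] (0 : ℝ), ‖a - (q + t • v)‖ ^ 2 < ‖a - q‖ ^ 2 := by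
  have hε : 0 < 2 * ⟪a - q, v⟫ / (‖v‖ ^ 2 + 1) := by positivity
  filter_upwards [Ioo_mem_nhdsGT hε] with t ⟨ht₀, htε⟩
  have hexpand : ‖a - (q + t • v)‖ ^ 2 = ‖a - q‖ ^ 2 - t * (2 * ⟪a - q, v⟫ - t * ‖v‖ ^ 2) := by
    rw [← sub_sub, norm_sub_sq_real, real_inner_smul_right, norm_smul, Real.norm_eq_abs,
      abs_of_pos ht₀]
    ring
  rw [lt_div_iff₀ (by positivity)] at htε
  rw [hexpand]
  nlinarith

section MaxPower

variable {ι F : Type*} [Fintype ι] [Nonempty ι] [NormedAddCommGroup F]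

/-- `‖y i - q‖ ^ 2 - c i` is the power of `q` with respect to the sphere about `y i` of squared
radius `c i`. -/
noncomputable def maxPower (y : ι → F) (c : ι → ℝ) (q : F) : ℝ :=
  Finset.univ.sup' Finset.univ_nonempty fun i => ‖y i - q‖ ^ 2 - c i

variable (y : ι → F) (c : ι → ℝ)

theorem le_maxPower (q : F) (i : ι) : ‖y i - q‖ ^ 2 - c i ≤ maxPower y c q :=
  Finset.le_sup' (fun i => ‖y i - q‖ ^ 2 - c i) (Finset.mem_univ i)

theorem continuous_maxPower : Continuous (maxPower y c) :=
  Continuous.finset_sup'_apply _ fun i _ => by fun_prop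

theorem exists_forall_maxPower_le [ProperSpace F] :
    ∃ q, ∀ q', maxPower y c q ≤ maxPower y c q' := by
  let i₀ : ι := Classical.arbitrary ι
  have hcoercive : Tendsto (fun q => ‖y i₀ - q‖ ^ 2 - c i₀) (cocompact F) atTop := by
    have hdist : Tendsto (fun q => ‖y i₀ - q‖) (cocompact F) atTop :=
      tendsto_norm_cocompact_atTop.comp
        (Homeomorph.subLeft (y i₀)).isClosedEmbedding.tendsto_cocompact
    exact tendsto_atTop_add_const_right _ _ ((tendsto_pow_atTop two_ne_zero).comp hdist)
  exact (continuous_maxPower y c).exists_forall_le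
    (tendsto_atTop_mono (fun q => le_maxPower y c q i₀) hcoercive)

theorem mem_convexHull_of_forall_maxPower_le [InnerProductSpace ℝ F] [CompleteSpace F] {q : F}
    (hq : ∀ q', maxPower y c q ≤ maxPower y c q') :
    q ∈ convexHull ℝ (y '' {i | ‖y i - q‖ ^ 2 - c i = maxPower y c q}) := by
  by_contra hout
  obtain ⟨f, u, hfq, hfy⟩ := geometric_hahn_banach_point_closed (convex_convexHull ℝ _)
    (((Set.toFinite _).image y).isCompact_convexHull (𝕜 := ℝ)).isClosed hout
  -- `v` points from `q` towards every active point, so short steps along `v` lower all powers.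
  set v := (InnerProductSpace.toDual ℝ F).symm f
  have hdescent : ∀ i, ∀ᶠ t in 𝓝[>] (0 : ℝ), ‖y i - (q + t • v)‖ ^ 2 - c i < maxPower y c q := by
    intro i
    rcases (le_maxPower y c q i).eq_or_lt with hactive | hinactive
    · have hv : 0 < ⟪y i - q, v⟫ := by
        have := hfy (y i) (subset_convexHull ℝ _ ⟨i, hactive, rfl⟩)
        rw [real_inner_comm, InnerProductSpace.toDual_symm_apply, map_sub]
        linarith
      filter_upwards [eventually_norm_sub_add_smul_sq_lt hv] with t ht
      linarith
    · have hcont : Continuous fun t : ℝ => ‖y i - (q + t • v)‖ ^ 2 - c i := by fun_prop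
      exact nhdsWithin_le_nhds ((hcont.tendsto' 0 _ (by simp)).eventually_lt_const hinactive)
  obtain ⟨t, ht⟩ := (eventually_all.2 hdescent).exists
  exact (hq (q + t • v)).not_gt ((Finset.sup'_lt_iff _).2 fun i _ => ht i)

end MaxPower

theorem exists_forall_dist_le_of_dist_le {ι E F : Type*} [Finite ι] [NormedAddCommGroup E]
    [InnerProductSpace ℝ E] [NormedAddCommGroup F] [InnerProductSpace ℝ F] [FiniteDimensional ℝ F]
    {x : ι → E} {y : ι → F} (h : ∀ i j, dist (y i) (y j) ≤ dist (x i) (x j)) (p : E) :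
    ∃ q, ∀ i, dist q (y i) ≤ dist p (x i) := by
  cases isEmpty_or_nonempty ι
  · exact ⟨0, isEmptyElim⟩
  have := Fintype.ofFinite ι
  set c : ι → ℝ := fun i => ‖x i - p‖ ^ 2
  obtain ⟨q, hq⟩ := exists_forall_maxPower_le y c
  obtain ⟨w, hw₀, hw_active, hw₁, rfl⟩ :=
    exists_weights_of_mem_convexHull_image (mem_convexHull_of_forall_maxPower_le y c hq)
  set q := ∑ i, w i • y i
  have hweighted : ∀ i, w i * maxPower y c q = w i * (‖y i - q‖ ^ 2 - c i) := fun i => by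
    by_cases hi : ‖y i - q‖ ^ 2 - c i = maxPower y c q
    · rw [hi]
    · rw [hw_active i hi, zero_mul, zero_mul]
  have hnonpos : maxPower y c q ≤ 0 := by
    calc maxPower y c q = ∑ i, w i * maxPower y c q := by rw [← Finset.sum_mul, hw₁, one_mul]
      _ = ∑ i, w i * ‖y i - q‖ ^ 2 - ∑ i, w i * ‖x i - p‖ ^ 2 := by
        simp only [hweighted, mul_sub, Finset.sum_sub_distrib, c]
      _ ≤ 0 := sub_nonpos.2 <| sum_mul_norm_sub_sum_smul_sq_le hw₀ hw₁
          (by simpa only [dist_eq_norm] using h) p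
  refine ⟨q, fun i => ?_⟩
  have := (le_maxPower y c q i).trans hnonpos
  rw [dist_comm, dist_eq_norm, dist_comm, dist_eq_norm]
  exact pow_le_pow_iff_left₀ (norm_nonneg _) (norm_nonneg _) two_ne_zero |>.1 (by linarith)

theorem four_point_kirszbraun_euclidean (n : ℕ)
    (x : Fin 3 → EuclideanSpace ℝ (Fin n)) (p : EuclideanSpace ℝ (Fin n))
    (xt : Fin 3 → EuclideanSpace ℝ (Fin 2))
    (h : ∀ i j, dist (xt i) (xt j) ≤ dist (x i) (x j)) :
    ∃ pt : EuclideanSpace ℝ (Fin 2), ∀ i, dist pt (xt i) ≤ dist p (x i) :=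
  exists_forall_dist_le_of_dist_le h p
end

section
/- Let H₁, H₂ be real Hilbert spaces, Q ⊆ H₁ an arbitrary subset, and f : Q → H₂ a 1-Lipschitz map. Then f extends to a 1-Lipschitz map F : H₁ → H₂ with F restricted to Q equal to f. -/
/-!
Zorn's lemma, applied to the sets `G ⊆ H₁ × H₂` with `dist p.2 q.2 ≤ dist p.1 q.1` on `G`,
reduces the theorem to adding one point over any `a : H₁`, that is, to finding a common point of
the balls `closedBall p.2 (dist a p.1)`, `p ∈ G`.

For finitely many balls, let `b` minimise `λ = maxᵢ dist b yᵢ / dist a xᵢ` over the convex hull of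
the centres. Optimality forces `b` into the convex hull of the centres at which the maximum is
attained. Writing `b = ∑ wᵢ yᵢ` there, the weighted mean square distance of the `yᵢ` to their
barycentre `b`, which is `λ² ∑ wᵢ dist a xᵢ ²`, is at most that of the `xᵢ` to `a`, because the
`yᵢ` are pairwise no further apart than the `xᵢ`; so `λ ≤ 1`.

Infinitely many balls are handled by completeness of `H₂`: the least-norm points of the finite
intersections form a Cauchy net, because projecting onto a convex set obeys Pythagoras' inequality.
-/

open Set Metric Filter Topology
open scoped RealInnerProductSpace

section

variable {E F : Type*} [NormedAddCommGroup E] [InnerProductSpace ℝ E]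
  [NormedAddCommGroup F] [InnerProductSpace ℝ F]

lemma norm_sum_smul_sq {ι : Type*} (s : Finset ι) (w : ι → ℝ) (u : ι → E) :
    ‖∑ i ∈ s, w i • u i‖ ^ 2 = ∑ i ∈ s, ∑ j ∈ s, w i * w j * ⟪u i, u j⟫ := by
  rw [← real_inner_self_eq_norm_sq, sum_inner]
  simp_rw [inner_sum, real_inner_smul_left, real_inner_smul_right, mul_assoc]

lemma sum_sum_mul_norm_sub_sq {ι : Type*} (s : Finset ι) {w : ι → ℝ}
    (hw : ∑ i ∈ s, w i = 1) (u : ι → E) :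
    ∑ i ∈ s, ∑ j ∈ s, w i * w j * ‖u i - u j‖ ^ 2 =
      2 * ∑ i ∈ s, w i * ‖u i‖ ^ 2 - 2 * ‖∑ i ∈ s, w i • u i‖ ^ 2 := by
  have hexpand : ∀ i j, w i * w j * ‖u i - u j‖ ^ 2 =
      w i * ‖u i‖ ^ 2 * w j + w i * (w j * ‖u j‖ ^ 2) - 2 * (w i * w j * ⟪u i, u j⟫) := by
    intro i j; rw [norm_sub_sq_real]; ring
  simp_rw [hexpand, Finset.sum_sub_distrib, Finset.sum_add_distrib, ← Finset.mul_sum,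
    ← Finset.sum_mul, hw, norm_sum_smul_sq]
  ring

lemma sum_mul_dist_centerMass_sq_le {ι : Type*} (s : Finset ι) {w : ι → ℝ}
    (hw₀ : ∀ i ∈ s, 0 ≤ w i) (hw₁ : ∑ i ∈ s, w i = 1) {u : ι → E} {v : ι → F}
    (huv : ∀ i ∈ s, ∀ j ∈ s, dist (v i) (v j) ≤ dist (u i) (u j)) (a : E) :
    ∑ i ∈ s, w i * dist (v i) (∑ j ∈ s, w j • v j) ^ 2 ≤ ∑ i ∈ s, w i * dist (u i) a ^ 2 := by
  set b := ∑ j ∈ s, w j • v j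
  have hcentered : ∑ i ∈ s, w i • (v i - b) = 0 := by
    simp only [smul_sub, Finset.sum_sub_distrib]
    rw [← Finset.sum_smul, hw₁, one_smul, sub_self]
  have hv := sum_sum_mul_norm_sub_sq s hw₁ fun i => v i - b
  have hu := sum_sum_mul_norm_sub_sq s hw₁ fun i => u i - a
  simp only [sub_sub_sub_cancel_right, hcentered, norm_zero] at hv hu
  have hle : ∑ i ∈ s, ∑ j ∈ s, w i * w j * ‖v i - v j‖ ^ 2 ≤
      ∑ i ∈ s, ∑ j ∈ s, w i * w j * ‖u i - u j‖ ^ 2 := by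
    refine Finset.sum_le_sum fun i hi => Finset.sum_le_sum fun j hj => ?_
    have := huv i hi j hj
    rw [dist_eq_norm, dist_eq_norm] at this
    gcongr
    exact mul_nonneg (hw₀ i hi) (hw₀ j hj)
  simp_rw [dist_eq_norm]
  nlinarith [sq_nonneg ‖∑ i ∈ s, w i • (u i - a)‖]

lemma dist_lineMap_lt_of_inner_nonpos {b c p : F} (h : ⟪b - c, p - c⟫ ≤ 0) (hbc : b ≠ c)
    {t : ℝ} (ht₀ : 0 < t) (ht₁ : t ≤ 1) : dist (AffineMap.lineMap b c t) p < dist b p := by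
  have hline : AffineMap.lineMap b c t - p = (1 - t) • (b - c) - (p - c) := by
    rw [AffineMap.lineMap_apply_module']; module
  have hb : b - p = (b - c) - (p - c) := by abel
  rw [dist_eq_norm, dist_eq_norm, hline, hb]
  have hpos : 0 < ‖b - c‖ := norm_sub_pos_iff.2 hbc
  generalize b - c = u at *
  generalize p - c = v at *
  refine (sq_lt_sq₀ (norm_nonneg _) (norm_nonneg _)).1 ?_
  rw [norm_sub_sq_real, norm_sub_sq_real, norm_smul, real_inner_smul_left, Real.norm_eq_abs,
    abs_of_nonneg (by linarith)]
  nlinarith [mul_pos ht₀ (mul_pos hpos hpos)]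

lemma mem_convexHull_active_of_isMinOn {ι : Type*} {s : Finset ι} (hs : s.Nonempty) (y : ι → F)
    {r : ι → ℝ} (hr : ∀ i ∈ s, 0 < r i) {b : F} (hb : b ∈ convexHull ℝ (y '' s))
    (hmin : IsMinOn (fun z => s.sup' hs fun i => dist z (y i) / r i) (convexHull ℝ (y '' s)) b) :
    b ∈ convexHull ℝ
      (y '' {i ∈ (s : Set ι) | dist b (y i) / r i = s.sup' hs fun i => dist b (y i) / r i}) := by
  set g := fun z => s.sup' hs fun i => dist z (y i) / r i
  set A := {i ∈ (s : Set ι) | dist b (y i) / r i = g b}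
  set C := convexHull ℝ (y '' A)
  by_contra hbC
  have hCne : C.Nonempty := by
    obtain ⟨i, hi, hgi⟩ := Finset.exists_mem_eq_sup' hs fun i => dist b (y i) / r i
    exact ⟨y i, subset_convexHull ℝ _ ⟨i, ⟨hi, hgi.symm⟩, rfl⟩⟩
  have hCcompact : IsCompact C :=
    ((s.finite_toSet.subset (sep_subset _ _)).image y).isCompact_convexHull ℝ
  obtain ⟨c, hcC, hc⟩ := exists_norm_eq_iInf_of_complete_convex hCne hCcompact.isComplete
    (convex_convexHull ℝ _) b
  have hproj := (norm_eq_iInf_iff_real_inner_le_zero (convex_convexHull ℝ _) hcC).1 hc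
  have hbc : b ≠ c := fun h => hbC (h ▸ hcC)
  -- Moving from `b` towards its projection `c` decreases every active ratio, while continuity
  -- keeps the inactive ones below `g b` for a while.
  have hdecrease : ∀ᶠ t in 𝓝[>] (0 : ℝ), ∀ i ∈ s,
      dist (AffineMap.lineMap b c t) (y i) / r i < g b := by
    refine s.eventually_all.2 fun i hi => ?_
    by_cases hiA : dist b (y i) / r i = g b
    · filter_upwards [Ioc_mem_nhdsGT one_pos] with t ht
      rw [← hiA]
      exact div_lt_div_of_pos_right (dist_lineMap_lt_of_inner_nonpos
        (hproj _ (subset_convexHull ℝ _ ⟨i, ⟨hi, hiA⟩, rfl⟩)) hbc ht.1 ht.2) (hr i hi)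
    · have hlt : dist b (y i) / r i < g b :=
        (Finset.le_sup' (fun i => dist b (y i) / r i) hi).lt_of_ne hiA
      have hcont : ContinuousAt (fun t : ℝ => dist (AffineMap.lineMap b c t) (y i) / r i) 0 := by
        fun_prop
      refine nhdsWithin_le_nhds (hcont.eventually (gt_mem_nhds ?_))
      simpa using hlt
  obtain ⟨t, hlt, ht⟩ := (hdecrease.and (Ioc_mem_nhdsGT one_pos)).exists
  have hmem : AffineMap.lineMap b c t ∈ convexHull ℝ (y '' s) :=
    (convex_convexHull ℝ _).lineMap_mem hb
      (convexHull_mono (image_mono (sep_subset _ _)) hcC) ⟨ht.1.le, ht.2⟩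
  exact (hmin hmem).not_gt ((Finset.sup'_lt_iff hs).2 hlt)

theorem exists_forall_dist_le_of_finset_s8 {ι : Type*} (s : Finset ι) {x : ι → E} {y : ι → F}
    (hxy : ∀ i ∈ s, ∀ j ∈ s, dist (y i) (y j) ≤ dist (x i) (x j)) (a : E) :
    ∃ b : F, ∀ i ∈ s, dist b (y i) ≤ dist a (x i) := by
  rcases s.eq_empty_or_nonempty with rfl | hs
  · simp
  by_cases hax : ∃ i ∈ s, a = x i
  · obtain ⟨i, hi, rfl⟩ := hax
    exact ⟨y i, hxy i hi⟩
  push Not at hax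
  have hr : ∀ i ∈ s, 0 < dist a (x i) := fun i hi => dist_pos.2 (hax i hi)
  set g := fun z => s.sup' hs fun i => dist z (y i) / dist a (x i)
  have hKne : (convexHull ℝ (y '' s)).Nonempty :=
    (hs.to_set.image y).mono (subset_convexHull ℝ _)
  obtain ⟨b, hbK, hmin⟩ := ((s.finite_toSet.image y).isCompact_convexHull ℝ).exists_isMinOn hKne
    (f := g) (by fun_prop)
  suffices hg : g b ≤ 1 from
    ⟨b, fun i hi => (div_le_one (hr i hi)).1 ((Finset.le_sup' _ hi).trans hg)⟩
  by_contra! hg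
  obtain ⟨κ, _, w, z, hw₀, hw₁, hzA, rfl⟩ :=
    mem_convexHull_iff_exists_fintype.1 (mem_convexHull_active_of_isMinOn hs y hr hbK hmin)
  choose idx hidx hzidx using hzA
  have hvar := sum_mul_dist_centerMass_sq_le Finset.univ (fun k _ => hw₀ k) hw₁
    (u := fun k => x (idx k)) (v := z)
    (fun k _ l _ => by rw [← hzidx k, ← hzidx l]; exact hxy _ (hidx k).1 _ (hidx l).1) a
  have hactive : ∀ k, dist (z k) (∑ l, w l • z l) = g (∑ l, w l • z l) * dist (x (idx k)) a := by
    intro k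
    rw [← hzidx k, dist_comm, dist_comm (x _)]
    exact (div_eq_iff (hr _ (hidx k).1).ne').1 (hidx k).2
  simp_rw [hactive, mul_pow, mul_left_comm (w _), ← Finset.mul_sum] at hvar
  have hpos : 0 < ∑ k, w k * dist (x (idx k)) a ^ 2 := by
    obtain ⟨k, -, hk⟩ :=
      Finset.exists_lt_of_sum_lt (s := Finset.univ) (f := 0) (g := w) (by simp [hw₁])
    exact Finset.sum_pos' (fun k _ => mul_nonneg (hw₀ k) (sq_nonneg _))
      ⟨k, Finset.mem_univ _, mul_pos hk (pow_pos (dist_pos.2 (hax _ (hidx k).1).symm) 2)⟩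
  exact (lt_mul_of_one_lt_left hpos (one_lt_pow₀ hg two_ne_zero)).not_ge hvar

lemma norm_sq_add_norm_sq_le_norm_sub_sq {u v : F} (h : ⟪u, v⟫ ≤ 0) :
    ‖u‖ ^ 2 + ‖v‖ ^ 2 ≤ ‖u - v‖ ^ 2 := by
  rw [norm_sub_sq_real]; linarith

theorem nonempty_iInter_of_antitone_convex_isClosed [CompleteSpace F] {ι : Type*}
    [SemilatticeSup ι] [Nonempty ι] {D : ι → Set F} (hD : Antitone D) (hne : ∀ i, (D i).Nonempty)
    (hclosed : ∀ i, IsClosed (D i)) (hconv : ∀ i, Convex ℝ (D i))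
    (hbdd : ∃ i, Bornology.IsBounded (D i)) : (⋂ i, D i).Nonempty := by
  have hproj : ∀ i, ∃ z ∈ D i, ∀ w ∈ D i, ⟪0 - z, w - z⟫ ≤ 0 := fun i => by
    obtain ⟨z, hz, hmin⟩ := exists_norm_eq_iInf_of_complete_convex (hne i)
      (hclosed i).isComplete (hconv i) 0
    exact ⟨z, hz, (norm_eq_iInf_iff_real_inner_le_zero (hconv i) hz).1 hmin⟩
  choose z hzD hz using hproj
  have hpyth : ∀ i j, i ≤ j → ‖z i‖ ^ 2 + ‖z j - z i‖ ^ 2 ≤ ‖z j‖ ^ 2 := fun i j hij => by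
    have := norm_sq_add_norm_sq_le_norm_sub_sq (hz i _ (hD hij (hzD j)))
    rwa [zero_sub, norm_neg, show -z i - (z j - z i) = -z j by abel, norm_neg] at this
  have hmono : Monotone fun i => ‖z i‖ ^ 2 := fun i j hij => by
    nlinarith [hpyth i j hij, sq_nonneg ‖z j - z i‖]
  obtain ⟨i₀, hi₀⟩ := hbdd
  obtain ⟨R, hR⟩ := hi₀.subset_closedBall 0
  have hbddAbove : BddAbove (range fun i => ‖z i‖ ^ 2) := by
    refine ⟨R ^ 2, forall_mem_range.2 fun i => (hmono (le_sup_left (b := i₀))).trans ?_⟩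
    exact pow_le_pow_left₀ (norm_nonneg _)
      (mem_closedBall_zero_iff.1 (hR (hD le_sup_right (hzD _)))) 2
  have hlim := tendsto_atTop_ciSup hmono hbddAbove
  have hcauchy : CauchySeq z := by
    refine Metric.cauchySeq_iff'.2 fun ε hε => ?_
    obtain ⟨N, hN⟩ := (hlim.eventually_const_lt (sub_lt_self _ (pow_pos hε 2))).exists
    refine ⟨N, fun n hn => ?_⟩
    have hle : ‖z n‖ ^ 2 ≤ ⨆ i, ‖z i‖ ^ 2 := le_ciSup hbddAbove n
    rw [dist_eq_norm]
    nlinarith [hpyth N n hn, norm_nonneg (z n - z N)]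
  obtain ⟨q, hq⟩ := cauchySeq_tendsto_of_complete hcauchy
  exact ⟨q, mem_iInter.2 fun i => (hclosed i).mem_of_tendsto hq
    (eventually_atTop.2 ⟨i, fun n hn => hD hn (hzD n)⟩)⟩

theorem nonempty_iInter_closedBall_of_forall_finset [CompleteSpace F] {ι : Type*} (c : ι → F)
    (r : ι → ℝ) (h : ∀ s : Finset ι, (⋂ i ∈ s, closedBall (c i) (r i)).Nonempty) :
    (⋂ i, closedBall (c i) (r i)).Nonempty := by
  classical
  rcases isEmpty_or_nonempty ι with hι | ⟨⟨i₀⟩⟩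
  · simp
  obtain ⟨q, hq⟩ := nonempty_iInter_of_antitone_convex_isClosed
    (D := fun s : Finset ι => ⋂ i ∈ s, closedBall (c i) (r i))
    (fun s t hst => biInter_subset_biInter_left (Finset.coe_subset.2 hst)) h
    (fun s => isClosed_biInter fun i _ => isClosed_closedBall)
    (fun s => convex_iInter₂ fun i _ => convex_closedBall _ _)
    ⟨{i₀}, by simpa using isBounded_closedBall⟩
  exact ⟨q, mem_iInter.2 fun i => by simpa using mem_iInter.1 hq {i}⟩

theorem exists_forall_dist_le_of_pairwise [CompleteSpace F] {G : Set (E × F)}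
    (hG : G.Pairwise fun p q => dist p.2 q.2 ≤ dist p.1 q.1) (a : E) :
    ∃ b : F, ∀ p ∈ G, dist b p.2 ≤ dist a p.1 := by
  have hfin (s : Finset G) :
      (⋂ p ∈ s, closedBall (p : E × F).2 (dist a (p : E × F).1)).Nonempty := by
    obtain ⟨b, hb⟩ := exists_forall_dist_le_of_finset_s8 s (x := fun p : G => (p : E × F).1)
      (y := fun p : G => (p : E × F).2) (fun p _ q _ => by
        rcases eq_or_ne p q with rfl | hpq
        · simp
        · exact hG p.2 q.2 (Subtype.coe_ne_coe.2 hpq)) a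
    exact ⟨b, mem_iInter₂.2 hb⟩
  obtain ⟨b, hb⟩ := nonempty_iInter_closedBall_of_forall_finset _ _ hfin
  exact ⟨b, fun p hp => mem_iInter.1 hb ⟨p, hp⟩⟩

end

theorem kirszbraun_hilbert_general {H₁ H₂ : Type*}
    [NormedAddCommGroup H₁] [InnerProductSpace ℝ H₁]
    [NormedAddCommGroup H₂] [InnerProductSpace ℝ H₂] [CompleteSpace H₂]
    (Q : Set H₁) (f : H₁ → H₂) (hf : LipschitzOnWith 1 f Q) :
    ∃ F : H₁ → H₂, LipschitzWith 1 F ∧ Set.EqOn F f Q := by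
  set short : Set (Set (H₁ × H₂)) := {G | G.Pairwise fun p q => dist p.2 q.2 ≤ dist p.1 q.1}
  have hgraph : (fun q => (q, f q)) '' Q ∈ short := by
    rintro _ ⟨q, hq, rfl⟩ _ ⟨q', hq', rfl⟩ -
    simpa using hf.dist_le_mul q hq q' hq'
  obtain ⟨M, hQM, hM⟩ := zorn_subset_nonempty short
    (fun c hc hchain _ => ⟨⋃₀ c, (pairwise_sUnion hchain.directedOn).2 hc,
      fun _ => subset_sUnion_of_mem⟩) _ hgraph
  have hMdist : ∀ p ∈ M, ∀ q ∈ M, dist p.2 q.2 ≤ dist p.1 q.1 := fun p hp q hq => by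
    rcases eq_or_ne p q with rfl | hpq
    · simp
    · exact hM.prop hp hq hpq
  have htotal : ∀ a, ∃ b, (a, b) ∈ M := fun a => by
    obtain ⟨b, hb⟩ := exists_forall_dist_le_of_pairwise hM.prop a
    refine ⟨b, hM.mem_of_prop_insert (pairwise_insert.2 ⟨hM.prop, fun p hp _ => ?_⟩)⟩
    exact ⟨hb p hp, by simpa [dist_comm] using hb p hp⟩
  choose F hF using htotal
  refine ⟨F, LipschitzWith.of_dist_le_mul fun a a' => by simpa using hMdist _ (hF a) _ (hF a'),
    fun q hq => ?_⟩
  simpa using hMdist _ (hF q) _ (hQM ⟨q, hq, rfl⟩)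

theorem kirszbraun_hilbert {H₁ H₂ : Type*}
    [NormedAddCommGroup H₁] [InnerProductSpace ℝ H₁] [CompleteSpace H₁]
    [NormedAddCommGroup H₂] [InnerProductSpace ℝ H₂] [CompleteSpace H₂]
    (Q : Set H₁) (f : H₁ → H₂) (hf : LipschitzOnWith 1 f Q) :
    ∃ F : H₁ → H₂, LipschitzWith 1 F ∧ Set.EqOn F f Q :=
  kirszbraun_hilbert_general Q f hf
end

section
/- There is no 1-Lipschitz map F from the closed upper unit hemisphere S⁺ ⊂ S² (with its intrinsic, angular metric) to its boundary equator ∂S⁺ ≅ S¹ (with its intrinsic metric) that restricts to the identity on ∂S⁺. -/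
open Set Metric Real RealInnerProductSpace

theorem no_short_retraction_hemisphere_to_equator :
    ¬ ∃ F : EuclideanSpace ℝ (Fin 3) → EuclideanSpace ℝ (Fin 3),
      (∀ v : EuclideanSpace ℝ (Fin 3), ‖v‖ = 1 → 0 ≤ v 2 →
        ‖F v‖ = 1 ∧ F v 2 = 0) ∧
      (∀ u v : EuclideanSpace ℝ (Fin 3), ‖u‖ = 1 → 0 ≤ u 2 → ‖v‖ = 1 → 0 ≤ v 2 →
        Real.arccos ⟪F u, F v⟫ ≤ Real.arccos ⟪u, v⟫) ∧
      (∀ v : EuclideanSpace ℝ (Fin 3), ‖v‖ = 1 → v 2 = 0 → F v = v) := by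
  rintro ⟨F, hmap, hlip, hfix⟩
  set N : EuclideanSpace ℝ (Fin 3) := EuclideanSpace.single 2 (1 : ℝ) with hN
  have hNnorm : ‖N‖ = 1 := by simp [hN]
  have hN2 : (0 : ℝ) ≤ N 2 := by simp [hN]
  obtain ⟨hFNnorm, hFN2⟩ := hmap N hNnorm hN2
  set w : EuclideanSpace ℝ (Fin 3) := -(F N) with hw
  have hwnorm : ‖w‖ = 1 := by simp [hw, hFNnorm]
  have hw2 : w 2 = 0 := by simp [hw, hFN2]
  have hFw : F w = w := hfix w hwnorm hw2
  have hinnerNw : ⟪N, w⟫ = 0 := by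
    rw [hN, EuclideanSpace.inner_single_left]
    simpa using hw2
  have hinnerFF : ⟪F N, F w⟫ = -1 := by
    rw [hFw, hw, inner_neg_right, real_inner_self_eq_norm_sq, hFNnorm]
    norm_num
  have h := hlip N w hNnorm hN2 hwnorm (le_of_eq hw2.symm)
  rw [hinnerNw, hinnerFF, Real.arccos_neg_one, Real.arccos_zero] at h
  linarith [Real.pi_pos]
end

section
/- Let △x̃¹x̃²x̃³ be a triangle in ℝ², and p̃², p̃³ points with ‖p̃³ − x̃¹‖ = ‖p̃² − x̃¹‖, such that p̃³ lies on the same side of line x̃¹x̃² as x̃³, and p̃² lies on the same side of line x̃³x̃¹ as x̃². Let ẋ² be the image of x̃² under the rotation about x̃¹ taking the ray x̃¹p̃³ to the ray x̃¹p̃². Then the triangles △p̃³x̃¹x̃² and △p̃²x̃³x̃¹ have disjoint convex hulls except for the common point x̃¹ if and only if ‖ẋ² − x̃³‖ < ‖x̃² − x̃³‖. -/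
/-!
Translate `x1` to the origin, divide by `x2 - x1` and reflect if necessary, so that `x2 = 1` and
`p3`, `x3` lie in the upper half plane. In polar coordinates `p3 = R e^{iα}`, `x3 = ρ e^{iγ}` and
`p2 = R e^{i(γ - β)}`, where `α`, `β` are the two angles of the hypothesis, and both sides of the
equivalence say `α + β < γ`. If so, the bisector of the rays through `p3` and `p2` separates the two
triangles; if not, the ray through `p2` or the one through `x2` meets both of them. On the other
side, `ẋ2` is `x2` turned by `γ - β - α`, so `∠ ẋ2 x1 x3 = α + β`, and by the law of cosines `ẋ2`
is closer to `x3` than `x2` exactly when this angle is smaller than `∠ x2 x1 x3 = γ`.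
-/

open Set Metric Real Complex EuclideanGeometry

open ComplexConjugate

section Convex

variable {E F : Type*} [AddCommGroup E] [Module ℝ E] [AddCommGroup F] [Module ℝ F]

theorem convexHull_image_inter_eq_singleton_iff {f : E →ᵃ[ℝ] F} (hf : Function.Injective f)
    (s t : Set E) (z : E) :
    convexHull ℝ (f '' s) ∩ convexHull ℝ (f '' t) = {f z} ↔
      convexHull ℝ s ∩ convexHull ℝ t = {z} := by
  rw [← f.image_convexHull, ← f.image_convexHull, ← image_inter hf, ← image_singleton,
    image_eq_image hf]

theorem convex_insert_zero_halfSpace_lt (f : E →ₗ[ℝ] ℝ) :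
    Convex ℝ (insert 0 {z | f z < 0}) := by
  intro x hx y hy a b ha hb hab
  simp only [mem_insert_iff, mem_ofPred_eq] at hx hy ⊢
  rcases hx with rfl | hx <;> rcases hy with rfl | hy
  · simp
  · rcases hb.eq_or_lt with rfl | hb <;> simp [*, mul_neg_of_pos_of_neg]
  · rcases ha.eq_or_lt with rfl | ha <;> simp [*, mul_neg_of_pos_of_neg]
  · right
    simp only [map_add, map_smul, smul_eq_mul]
    rcases ha.eq_or_lt with rfl | ha
    · simpa [show b = 1 by linarith] using hy
    · nlinarith [mul_neg_of_pos_of_neg ha hx, mul_nonneg hb (neg_nonneg.2 hy.le)]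

theorem convexHull_inter_eq_zero_of_separates (f : E →ₗ[ℝ] ℝ) {a b c d : E}
    (ha : f a < 0) (hb : f b < 0) (hc : 0 ≤ f c) (hd : 0 ≤ f d) :
    convexHull ℝ {a, b, 0} ∩ convexHull ℝ {c, d, 0} = {0} := by
  refine eq_singleton_iff_unique_mem.2
    ⟨⟨subset_convexHull ℝ _ (by simp), subset_convexHull ℝ _ (by simp)⟩, ?_⟩
  rintro z ⟨hz₁, hz₂⟩
  have h₁ : z ∈ insert 0 {z | f z < 0} :=
    convexHull_min (by simp [insert_subset_iff, ha, hb]) (convex_insert_zero_halfSpace_lt f) hz₁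
  have h₂ : 0 ≤ f z :=
    convexHull_min (by simp [insert_subset_iff, hc, hd]) (convex_halfSpace_ge f.isLinear 0) hz₂
  rcases h₁ with h₁ | h₁
  · exact h₁
  · exact absurd h₁ h₂.not_gt

theorem convexHull_inter_ne_zero_of_mem_cone {a b d x : E} {l m : ℝ} (hl : 0 ≤ l) (hm : 0 ≤ m)
    (hx : x = l • a + m • b) (hx₀ : x ≠ 0) :
    convexHull ℝ {a, b, 0} ∩ convexHull ℝ {x, d, 0} ≠ {0} := by
  have hs : 0 < l + m := by
    refine (add_nonneg hl hm).lt_of_ne fun h => hx₀ ?_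
    rw [hx, (add_eq_zero_iff_of_nonneg hl hm).1 h.symm |>.1,
      (add_eq_zero_iff_of_nonneg hl hm).1 h.symm |>.2]
    simp
  set k := max (l + m) 1
  have hk : 0 < k := lt_max_of_lt_right one_pos
  have hseg : (l + m)⁻¹ • x ∈ convexHull ℝ {a, b, 0} := by
    refine segment_subset_convexHull (x := a) (y := b) (by simp) (by simp)
      ⟨l / (l + m), m / (l + m), by positivity, by positivity, by field_simp, ?_⟩
    rw [hx, smul_add, smul_smul, smul_smul, div_eq_inv_mul, div_eq_inv_mul]
  have h₁ : k⁻¹ • x ∈ convexHull ℝ {a, b, 0} := by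
    have := (convex_convexHull ℝ _).smul_mem_of_zero_mem (subset_convexHull ℝ _ (by simp)) hseg
      (t := (l + m) / k) ⟨by positivity, div_le_one_of_le₀ (le_max_left _ _) hk.le⟩
    rwa [smul_smul, show (l + m) / k * (l + m)⁻¹ = k⁻¹ by field_simp] at this
  have h₂ : k⁻¹ • x ∈ convexHull ℝ {x, d, 0} :=
    (convex_convexHull ℝ _).smul_mem_of_zero_mem (subset_convexHull ℝ _ (by simp))
      (subset_convexHull ℝ _ (by simp)) ⟨by positivity, inv_le_one_of_one_le₀ (le_max_right _ _)⟩
  intro h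
  have := h ▸ mem_inter h₁ h₂
  exact smul_ne_zero (inv_ne_zero hk.ne') hx₀ this

end Convex

theorem norm_sub_lt_norm_sub_iff_inner_lt {F : Type*} [NormedAddCommGroup F]
    [InnerProductSpace ℝ F] {a b : F} (v : F) (h : ‖a‖ = ‖b‖) :
    ‖a - v‖ < ‖b - v‖ ↔ inner ℝ b v < inner ℝ a v := by
  rw [← sq_lt_sq₀ (norm_nonneg _) (norm_nonneg _), norm_sub_sq_real, norm_sub_sq_real, h]
  constructor <;> intro <;> linarith

namespace Complex

theorem im_div_eq_im_conj_mul_div (a b : ℂ) : (a / b).im = (conj b * a).im / normSq b := by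
  rw [div_im, mul_im, conj_re, conj_im]
  ring

theorem im_conj_mul_smul_eq_add (a b d : ℂ) :
    (conj a * b).im • d = (conj d * b).im • a + (conj a * d).im • b := by
  apply Complex.ext <;> simp [mul_im, mul_re] <;> ring

theorem im_conj_sub_mul_sub_rotate (a b c : ℂ) :
    (conj (b - a) * (c - a)).im = (conj (c - b) * (a - b)).im := by
  simp only [mul_im, conj_re, conj_im, sub_re, sub_im]
  ring

theorem exists_nonneg_smul_add_of_im_conj_mul {a b d : ℂ} (hab : 0 < (conj a * b).im)
    (hdb : 0 ≤ (conj d * b).im) (had : 0 ≤ (conj a * d).im) :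
    ∃ l m : ℝ, 0 ≤ l ∧ 0 ≤ m ∧ d = l • a + m • b := by
  refine ⟨(conj d * b).im / (conj a * b).im, (conj a * d).im / (conj a * b).im,
    div_nonneg hdb hab.le, div_nonneg had hab.le, ?_⟩
  rw [div_eq_inv_mul, div_eq_inv_mul, mul_smul, mul_smul, ← smul_add,
    ← im_conj_mul_smul_eq_add, smul_smul, inv_mul_cancel₀ hab.ne', one_smul]

theorem conj_polar_mul_polar (r s x y : ℝ) :
    conj (r * exp (x * I)) * (s * exp (y * I)) = ↑(r * s) * exp (↑(y - x) * I) := by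
  rw [map_mul, ← exp_conj, map_mul, conj_ofReal, conj_ofReal, conj_I, mul_mul_mul_comm,
    ← exp_add]
  push_cast
  ring_nf

theorem im_conj_polar_mul_polar (r s x y : ℝ) :
    (conj (r * exp (x * I)) * (s * exp (y * I))).im = r * s * Real.sin (y - x) := by
  rw [conj_polar_mul_polar, im_ofReal_mul, exp_ofReal_mul_I_im]

theorem inner_polar_polar (r s x y : ℝ) :
    inner ℝ (r * exp (x * I)) (s * exp (y * I)) = r * s * Real.cos (y - x) := by
  rw [Complex.inner, mul_comm, conj_polar_mul_polar, re_ofReal_mul, exp_ofReal_mul_I_re]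

theorem arg_mem_Ioo_of_im_pos {z : ℂ} (hz : 0 < z.im) : arg z ∈ Ioo 0 π :=
  ⟨(arg_nonneg_iff.2 hz.le).lt_of_ne' fun h => hz.ne' (arg_eq_zero_iff.1 h).2,
    arg_lt_pi_iff.2 (Or.inr hz.ne')⟩

theorem norm_exp_sub_lt_norm_one_sub_iff {ρ φ γ : ℝ} (hρ : 0 < ρ) (hγ : γ ∈ Icc 0 π)
    (hφ : γ - φ ∈ Icc 0 π) :
    ‖exp (φ * I) - ρ * exp (γ * I)‖ < ‖1 - ρ * exp (γ * I)‖ ↔ 0 < φ := by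
  have h₁ : inner ℝ (1 : ℂ) (ρ * exp (γ * I)) = ρ * Real.cos γ := by
    simp [Complex.inner]
  have h₂ : inner ℝ (exp (φ * I)) (ρ * exp (γ * I)) = ρ * Real.cos (γ - φ) := by
    simpa using inner_polar_polar 1 ρ φ γ
  rw [norm_sub_lt_norm_sub_iff_inner_lt _ (by simp [norm_exp_ofReal_mul_I]), h₁, h₂,
    mul_lt_mul_iff_right₀ hρ, strictAntiOn_cos.lt_iff_gt hγ hφ]
  constructor <;> intro <;> linarith

theorem convexHull_polar_inter_eq_zero_iff {R ρ α β γ : ℝ} (hR : 0 < R) (hρ : 0 < ρ)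
    (hα : 0 < α) (hβ : 0 < β) (hγ : 0 < γ) (hγπ : γ < π) (hαβ : α + β < π) :
    convexHull ℝ {↑R * exp (↑α * I), 0, 1} ∩
        convexHull ℝ {↑R * exp (↑(γ - β) * I), ↑ρ * exp (↑γ * I), 0} = {0} ↔
      α + β < γ := by
  have h₁ : (1 : ℂ) = ↑(1 : ℝ) * exp (↑(0 : ℝ) * I) := by simp
  have hq₂ : ↑R * exp (↑(γ - β) * I) ≠ 0 := by simp [hR.ne']
  rw [pair_comm (0 : ℂ) 1]
  constructor
  · intro h
    by_contra! hle
    -- the ray through `R e^{i(γ - β)}` (if `β ≤ γ`) or through `1` meets both triangles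
    rcases le_or_gt β γ with hβγ | hγβ
    · obtain ⟨l, m, hl, hm, hcone⟩ := exists_nonneg_smul_add_of_im_conj_mul
        (a := 1) (b := ↑R * exp (↑α * I)) (d := ↑R * exp (↑(γ - β) * I))
        (by rw [h₁, im_conj_polar_mul_polar]
            exact mul_pos (by simpa using hR) (sin_pos_of_pos_of_lt_pi (by linarith) (by linarith)))
        (by rw [im_conj_polar_mul_polar]
            exact mul_nonneg (mul_nonneg hR.le hR.le)
              (sin_nonneg_of_nonneg_of_le_pi (by linarith) (by linarith)))
        (by rw [h₁, im_conj_polar_mul_polar]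
            exact mul_nonneg (by simpa using hR.le)
              (sin_nonneg_of_nonneg_of_le_pi (by linarith) (by linarith)))
      have := convexHull_inter_ne_zero_of_mem_cone (d := ↑ρ * exp (↑γ * I)) hl hm hcone hq₂
      rw [insert_comm] at this
      exact this h
    · obtain ⟨l, m, hl, hm, hcone⟩ := exists_nonneg_smul_add_of_im_conj_mul
        (a := ↑R * exp (↑(γ - β) * I)) (b := ↑ρ * exp (↑γ * I)) (d := 1)
        (by rw [im_conj_polar_mul_polar]
            exact mul_pos (mul_pos hR hρ) (sin_pos_of_pos_of_lt_pi (by linarith) (by linarith)))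
        (by rw [h₁, im_conj_polar_mul_polar]
            exact mul_nonneg (by simpa using hρ.le)
              (sin_nonneg_of_nonneg_of_le_pi (by linarith) (by linarith)))
        (by rw [h₁, im_conj_polar_mul_polar]
            exact mul_nonneg (by simpa using hR.le)
              (sin_nonneg_of_nonneg_of_le_pi (by linarith) (by linarith)))
      have := convexHull_inter_ne_zero_of_mem_cone (d := ↑R * exp (↑α * I)) hl hm hcone one_ne_zero
      rw [inter_comm, insert_comm (1 : ℂ)] at this
      exact this h
  · intro h
    -- the line along the bisector of `α` and `γ - β` separates the triangles
    set T := (α + (γ - β)) / 2 with hT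
    let f : ℂ →ₗ[ℝ] ℝ := imLm ∘ₗ LinearMap.mulLeft ℝ (conj (exp (T * I)))
    have hf (r x : ℝ) : f (r * exp (x * I)) = r * Real.sin (x - T) := by
      have := im_conj_polar_mul_polar 1 r T x
      rw [ofReal_one, one_mul, one_mul] at this
      exact this
    refine convexHull_inter_eq_zero_of_separates f ?_ ?_ ?_ ?_
    · rw [hf]
      exact mul_neg_of_pos_of_neg hR (sin_neg_of_neg_of_neg_pi_lt (by linarith) (by linarith))
    · rw [h₁, hf]
      exact mul_neg_of_pos_of_neg one_pos (sin_neg_of_neg_of_neg_pi_lt (by linarith) (by linarith))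
    · rw [hf]
      exact mul_nonneg hR.le (sin_nonneg_of_nonneg_of_le_pi (by linarith) (by linarith))
    · rw [hf]
      exact mul_nonneg hρ.le (sin_nonneg_of_nonneg_of_le_pi (by linarith) (by linarith))

theorem exists_polar_frame {u q₃ q₂ v : ℂ} (hlen : ‖q₃‖ = ‖q₂‖) (h₃ : 0 < (conj u * q₃).im)
    (h₂ : 0 < (conj q₂ * v).im) (hv : 0 < (conj u * v).im)
    (hangle : InnerProductGeometry.angle u q₃ + InnerProductGeometry.angle q₂ v < π) :
    ∃ R ρ α β γ : ℝ, 0 < R ∧ 0 < ρ ∧ 0 < α ∧ 0 < β ∧ 0 < γ ∧ γ < π ∧ α + β < π ∧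
      q₃ = u * (R * exp (α * I)) ∧ q₂ = u * (R * exp (↑(γ - β) * I)) ∧
        v = u * (ρ * exp (γ * I)) := by
  have hne {a b : ℂ} (h : 0 < (conj a * b).im) : a ≠ 0 ∧ b ≠ 0 := by
    constructor <;> rintro rfl <;> simp at h
  have him {a b : ℂ} (h : 0 < (conj a * b).im) : 0 < (b / a).im := by
    rw [im_div_eq_im_conj_mul_div]
    exact div_pos h (normSq_pos.2 (hne h).1)
  obtain ⟨hu, hq₃⟩ := hne h₃
  obtain ⟨hq₂, hv₀⟩ := hne h₂
  obtain ⟨hα, -⟩ := arg_mem_Ioo_of_im_pos (him h₃)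
  obtain ⟨hβ, -⟩ := arg_mem_Ioo_of_im_pos (him h₂)
  obtain ⟨hγ, hγπ⟩ := arg_mem_Ioo_of_im_pos (him hv)
  rw [InnerProductGeometry.angle_comm u, angle_eq_abs_arg hq₃ hu, abs_of_pos hα,
    InnerProductGeometry.angle_comm q₂, angle_eq_abs_arg hv₀ hq₂, abs_of_pos hβ] at hangle
  have hexp {z : ℂ} (hz : z ≠ 0) : exp (arg z * I) = z / ‖z‖ := by
    rw [eq_div_iff (by simpa using hz), mul_comm, norm_mul_exp_arg_mul_I]
  -- `γ - β` rather than `arg (q₂ / u)`, which may differ from it by `2π`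
  refine ⟨‖q₃ / u‖, ‖v / u‖, arg (q₃ / u), arg (v / q₂), arg (v / u),
    norm_pos_iff.2 (div_ne_zero hq₃ hu), norm_pos_iff.2 (div_ne_zero hv₀ hu),
    hα, hβ, hγ, hγπ, hangle, ?_, ?_, ?_⟩
  · rw [norm_mul_exp_arg_mul_I]
    field_simp
  · have : (‖u‖ : ℂ) ≠ 0 := by simpa using hu
    have : (‖v‖ : ℂ) ≠ 0 := by simpa using hv₀
    have : (‖q₂‖ : ℂ) ≠ 0 := by simpa using hq₂
    push_cast
    rw [sub_mul, exp_sub, hexp (div_ne_zero hv₀ hu), hexp (div_ne_zero hv₀ hq₂)]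
    simp only [norm_div, ofReal_div, hlen]
    field_simp
  · rw [norm_mul_exp_arg_mul_I]
    field_simp

end Complex

theorem overlap_iff_of_pos {x₁ x₂ x₃ p₂ p₃ : ℂ} (hlen : ‖p₃ - x₁‖ = ‖p₂ - x₁‖)
    (h₃ : 0 < (conj (x₂ - x₁) * (p₃ - x₁)).im) (h₂ : 0 < (conj (p₂ - x₁) * (x₃ - x₁)).im)
    (hv : 0 < (conj (x₂ - x₁) * (x₃ - x₁)).im) (hangle : ∠ x₂ x₁ p₃ + ∠ p₂ x₁ x₃ < π) :
    convexHull ℝ {p₃, x₁, x₂} ∩ convexHull ℝ {p₂, x₃, x₁} = {x₁} ↔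
      ‖x₁ + (p₂ - x₁) / (p₃ - x₁) * (x₂ - x₁) - x₃‖ < ‖x₂ - x₃‖ := by
  obtain ⟨R, ρ, α, β, γ, hR, hρ, hα, hβ, hγ, hγπ, hαβ, e₃, e₂, ev⟩ :=
    exists_polar_frame hlen h₃ h₂ hv hangle
  have hu : x₂ - x₁ ≠ 0 := by
    rintro h
    simp [h] at hv
  obtain ⟨g, hg⟩ : ∃ g : ℂ →ᵃ[ℝ] ℂ, ∀ z, g z = x₁ + (x₂ - x₁) * z :=
    ⟨(LinearMap.mulLeft ℝ (x₂ - x₁)).toAffineMap + AffineMap.const ℝ ℂ x₁,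
      fun z => by simp [add_comm]⟩
  have hg_inj : Function.Injective g := fun a b h => by simpa [hg, hu] using h
  have hhull : convexHull ℝ {p₃, x₁, x₂} ∩ convexHull ℝ {p₂, x₃, x₁} = {x₁} ↔
      convexHull ℝ {↑R * exp (↑α * I), 0, 1} ∩
        convexHull ℝ {↑R * exp (↑(γ - β) * I), ↑ρ * exp (↑γ * I), 0} = {0} := by
    refine Iff.trans ?_ (convexHull_image_inter_eq_singleton_iff hg_inj _ _ _)
    simp only [image_insert_eq, image_singleton, hg, ← e₃, ← e₂, ← ev, mul_zero, add_zero,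
      mul_one, add_sub_cancel]
  have hrot : (p₂ - x₁) / (p₃ - x₁) = exp (↑(γ - β - α) * I) := by
    rw [e₂, e₃, mul_div_mul_left _ _ hu, mul_div_mul_left _ _ (by simpa using hR.ne'),
      ← Complex.exp_sub]
    push_cast
    ring_nf
  have hnorm : ‖x₁ + (p₂ - x₁) / (p₃ - x₁) * (x₂ - x₁) - x₃‖ < ‖x₂ - x₃‖ ↔
      ‖exp (↑(γ - β - α) * I) - ρ * exp (γ * I)‖ < ‖1 - ρ * exp (γ * I)‖ := by
    rw [show x₁ + (p₂ - x₁) / (p₃ - x₁) * (x₂ - x₁) - x₃ =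
        (x₂ - x₁) * (exp (↑(γ - β - α) * I) - ρ * exp (γ * I)) by rw [hrot]; linear_combination -ev,
      show x₂ - x₃ = (x₂ - x₁) * (1 - ρ * exp (γ * I)) by linear_combination -ev,
      norm_mul, norm_mul, mul_lt_mul_iff_right₀ (norm_pos_iff.2 hu)]
  rw [hhull, hnorm, convexHull_polar_inter_eq_zero_iff hR hρ hα hβ hγ hγπ hαβ,
    norm_exp_sub_lt_norm_one_sub_iff hρ ⟨hγ.le, hγπ.le⟩ ⟨by linarith, by linarith⟩]
  constructor <;> intro <;> linarith

theorem overlap_iff_of_neg {x₁ x₂ x₃ p₂ p₃ : ℂ} (hlen : ‖p₃ - x₁‖ = ‖p₂ - x₁‖)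
    (h₃ : (conj (x₂ - x₁) * (p₃ - x₁)).im < 0) (h₂ : (conj (p₂ - x₁) * (x₃ - x₁)).im < 0)
    (hv : (conj (x₂ - x₁) * (x₃ - x₁)).im < 0) (hangle : ∠ x₂ x₁ p₃ + ∠ p₂ x₁ x₃ < π) :
    convexHull ℝ {p₃, x₁, x₂} ∩ convexHull ℝ {p₂, x₃, x₁} = {x₁} ↔
      ‖x₁ + (p₂ - x₁) / (p₃ - x₁) * (x₂ - x₁) - x₃‖ < ‖x₂ - x₃‖ := by
  have him (a b : ℂ) : (conj (conj a) * conj b).im = -(conj a * b).im := by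
    simp [mul_im]
    ring
  have hangle_conj (a b c : ℂ) : ∠ (conj a) (conj b) (conj c) = ∠ a b c := by
    simpa using conjLIE.toLinearIsometry.toAffineIsometry.angle_map a b c
  let c : ℂ →ᵃ[ℝ] ℂ := conjAe.toLinearMap.toAffineMap
  have hc_inj : Function.Injective c := by simpa [c] using (starRingEnd ℂ).injective
  have key := overlap_iff_of_pos (x₁ := conj x₁) (x₂ := conj x₂) (x₃ := conj x₃)
    (p₂ := conj p₂) (p₃ := conj p₃) (by simpa only [← map_sub, norm_conj] using hlen)
    (by rw [← map_sub, ← map_sub, him]; linarith) (by rw [← map_sub, ← map_sub, him]; linarith)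
    (by rw [← map_sub, ← map_sub, him]; linarith) (by rwa [hangle_conj, hangle_conj])
  rw [← convexHull_image_inter_eq_singleton_iff hc_inj]
  simpa only [← map_sub, ← map_div₀, ← map_mul, ← map_add, norm_conj, image_insert_eq,
    image_singleton, c, LinearMap.coe_toAffineMap, AlgEquiv.toLinearMap_apply, conjAe_coe] using key

theorem overlap_lemma_rotation_step_general (x1 x2 x3 p2 p3 : ℂ)
    (hlen : ‖p3 - x1‖ = ‖p2 - x1‖)
    -- `p3` and `x3` lie strictly on the same side of the line through `x1, x2`
    (hside1 : 0 < ((starRingEnd ℂ) (x2 - x1) * (p3 - x1)).im *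
                  ((starRingEnd ℂ) (x2 - x1) * (x3 - x1)).im)
    -- `p2` and `x2` lie strictly on the same side of the line through `x3, x1`
    (hside2 : 0 < ((starRingEnd ℂ) (x1 - x3) * (p2 - x3)).im *
                  ((starRingEnd ℂ) (x1 - x3) * (x2 - x3)).im)
    -- the angle condition ∠(x̃¹; x̃², p̃³) + ∠(x̃¹; p̃², x̃³) < π
    (hangle : EuclideanGeometry.angle x2 x1 p3 + EuclideanGeometry.angle p2 x1 x3 < π) :
    -- `ẋ²` is the image of `x̃²` under the rotation about `x̃¹` taking ray `x̃¹p̃³` to ray `x̃¹p̃²`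
    ((convexHull ℝ ({p3, x1, x2} : Set ℂ)) ∩ (convexHull ℝ ({p2, x3, x1} : Set ℂ)) = {x1}) ↔
      ‖(x1 + ((p2 - x1) / (p3 - x1)) * (x2 - x1)) - x3‖ <
        ‖x2 - x3‖ := by
  rw [im_conj_sub_mul_sub_rotate x3 x1 p2, im_conj_sub_mul_sub_rotate x3 x1 x2] at hside2
  rcases (right_ne_zero_of_mul hside1.ne').lt_or_gt with hneg | hpos
  · exact overlap_iff_of_neg hlen ((neg_iff_neg_of_mul_pos hside1).2 hneg)
      ((neg_iff_neg_of_mul_pos hside2).2 hneg) hneg hangle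
  · exact overlap_iff_of_pos hlen ((pos_iff_pos_of_mul_pos hside1).2 hpos)
      ((pos_iff_pos_of_mul_pos hside2).2 hpos) hpos hangle

theorem overlap_lemma_rotation_step (x1 x2 x3 p2 p3 : ℂ)
    (htri : ¬ Collinear ℝ ({x1, x2, x3} : Set ℂ))
    (hp3 : p3 ≠ x1) (hp2 : p2 ≠ x1)
    (hlen : ‖p3 - x1‖ = ‖p2 - x1‖)
    -- `p3` and `x3` lie strictly on the same side of the line through `x1, x2`
    (hside1 : 0 < ((starRingEnd ℂ) (x2 - x1) * (p3 - x1)).im *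
                  ((starRingEnd ℂ) (x2 - x1) * (x3 - x1)).im)
    -- `p2` and `x2` lie strictly on the same side of the line through `x3, x1`
    (hside2 : 0 < ((starRingEnd ℂ) (x1 - x3) * (p2 - x3)).im *
                  ((starRingEnd ℂ) (x1 - x3) * (x2 - x3)).im)
    -- the angle condition ∠(x̃¹; x̃², p̃³) + ∠(x̃¹; p̃², x̃³) < π
    (hangle : EuclideanGeometry.angle x2 x1 p3 + EuclideanGeometry.angle p2 x1 x3 < π) :
    -- `ẋ²` is the image of `x̃²` under the rotation about `x̃¹` taking ray `x̃¹p̃³` to ray `x̃¹p̃²`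
    ((convexHull ℝ ({p3, x1, x2} : Set ℂ)) ∩ (convexHull ℝ ({p2, x3, x1} : Set ℂ)) = {x1}) ↔
      ‖(x1 + ((p2 - x1) / (p3 - x1)) * (x2 - x1)) - x3‖ <
        ‖x2 - x3‖ :=
  overlap_lemma_rotation_step_general x1 x2 x3 p2 p3 hlen hside1 hside2 hangle
end

section
/- Let X be a complete geodesic metric space and f⁰,…,fᵏ : X → ℝ an array of 1-convex locally Lipschitz functions. For x in the standard k-simplex Δᵏ let σ(x) = argmin Σᵢ xᵢ fⁱ (which exists and is unique). Then σ : Δᵏ → X is locally Lipschitz (hence Lipschitz, since Δᵏ is compact). -/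
open Set Metric Finset

def UnitSpeedOn {X : Type*} [MetricSpace X] (γ : ℝ → X) (L : ℝ) : Prop :=
  ∀ s ∈ Set.Icc (0:ℝ) L, ∀ t ∈ Set.Icc (0:ℝ) L, dist (γ s) (γ t) = |s - t|

def GeodesicSpace (X : Type*) [MetricSpace X] : Prop :=
  ∀ x y : X, ∃ γ : ℝ → X, γ 0 = x ∧ γ (dist x y) = y ∧ UnitSpeedOn γ (dist x y)

def OneConvex {X : Type*} [MetricSpace X] (f : X → ℝ) : Prop :=
  ∀ (γ : ℝ → X) (L : ℝ), UnitSpeedOn γ L →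
    ConvexOn ℝ (Set.Icc 0 L) (fun t => f (γ t) - t ^ 2 / 2)

/-!
For `x` in the simplex write `Fₓ = ∑ xᵢ fⁱ`; it is 1-convex. At its minimum `p`, 1-convexity
along the geodesic from `p` to `z` gives `Fₓ p + d(p, z)² / 2 ≤ Fₓ z`. Adding this for
`(x, σ x, σ y)` and `(y, σ y, σ x)` yields
`d(σ x, σ y)² ≤ ∑ (xᵢ - yᵢ) (fⁱ(σ y) - fⁱ(σ x))`, so `d(σ x, σ y) ≤ K ∑ |xᵢ - yᵢ|` as soon as
`σ x` and `σ y` lie in a ball on which every `fⁱ` is `K`-Lipschitz. Continuity of `σ`, which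
guarantees this for nearby `x` and `y`, comes from the same inequality with `s • x ≤ y` in place
of `x`, `s` close to `1`. Finally, locally Lipschitz on the compact simplex means Lipschitz.
-/

open Filter Topology

theorem convexOn_finset_sum {ι E : Type*} [AddCommMonoid E] [Module ℝ E] (t : Finset ι)
    {s : Set E} (hs : Convex ℝ s) {g : ι → E → ℝ} (hg : ∀ i ∈ t, ConvexOn ℝ s (g i)) :
    ConvexOn ℝ s (fun z => ∑ i ∈ t, g i z) := by
  classical
  induction t using Finset.cons_induction with
  | empty => simpa using convexOn_const 0 hs
  | cons a t _ ih =>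
    simp only [Finset.sum_cons]
    exact (hg a (mem_cons_self a t)).add (ih fun i hi => hg i (mem_cons_of_mem hi))

theorem eventually_mul_le_nhdsWithin_stdSimplex {ι : Type*} [Fintype ι] {x : ι → ℝ}
    (hx : ∀ i, 0 ≤ x i) {s : ℝ} (hs : s < 1) :
    ∀ᶠ y in 𝓝[stdSimplex ℝ ι] x, ∀ i, s * x i ≤ y i := by
  refine eventually_all.2 fun i => ?_
  rcases (hx i).eq_or_lt with hxi | hxi
  · filter_upwards [self_mem_nhdsWithin] with y hy
    simpa [← hxi] using hy.1 i
  · have hlt : s * x i < x i := by nlinarith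
    exact (((continuous_apply i).tendsto x).eventually_const_lt hlt).filter_mono
      nhdsWithin_le_nhds |>.mono fun y hy => hy.le

theorem exists_mem_nhds_forall_lipschitzOnWith {ι α β : Type*} [Fintype ι]
    [PseudoEMetricSpace α] [PseudoEMetricSpace β] {f : ι → α → β}
    (hf : ∀ i, LocallyLipschitz (f i)) (a : α) :
    ∃ K, ∃ U ∈ 𝓝 a, ∀ i, LipschitzOnWith K (f i) U := by
  choose K U hU hKU using fun i => hf i a
  exact ⟨∑ i, K i, ⋂ i, U i, iInter_mem.2 hU, fun i => ((hKU i).mono (iInter_subset U i)).weaken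
    (single_le_sum (fun j _ => zero_le) (mem_univ i))⟩

section OneConvex

variable {X : Type*} [MetricSpace X]

theorem oneConvex_sum_mul {ι : Type*} [Fintype ι] {f : ι → X → ℝ} (hf : ∀ i, OneConvex (f i))
    {w : ι → ℝ} (hw : w ∈ stdSimplex ℝ ι) : OneConvex (fun z => ∑ i, w i * f i z) := by
  intro γ L hγ
  have hsplit : (fun t => (∑ i, w i * f i (γ t)) - t ^ 2 / 2)
      = fun t => ∑ i, w i • (f i (γ t) - t ^ 2 / 2) := by
    funext t
    simp only [smul_eq_mul, mul_sub, sum_sub_distrib, ← sum_mul, hw.2, one_mul]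
  rw [hsplit]
  exact convexOn_finset_sum _ (convex_Icc 0 L) fun i _ => (hf i γ L hγ).smul (hw.1 i)

/-- Comparing `F` along the geodesic from `p` to `z` with its value at the minimum `p` gives
`F p + (1 - λ) d² / 2 ≤ F z` for every `λ ∈ (0, 1)`; let `λ → 0`. -/
theorem OneConvex.add_sq_dist_div_two_le (hgeo : GeodesicSpace X) {F : X → ℝ}
    (hF : OneConvex F) {p : X} (hp : ∀ z, F p ≤ F z) (z : X) :
    F p + dist p z ^ 2 / 2 ≤ F z := by
  obtain ⟨γ, hγp, hγz, hγ⟩ := hgeo p z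
  set d := dist p z
  have hd : 0 ≤ d := dist_nonneg
  have hlim : Tendsto (fun t : ℝ => F p + (1 - t) * d ^ 2 / 2) (𝓝[>] 0)
      (𝓝 (F p + d ^ 2 / 2)) := by
    refine (Continuous.tendsto' ?_ 0 _ (by simp)).mono_left nhdsWithin_le_nhds
    fun_prop
  refine le_of_tendsto hlim (eventually_of_mem (Ioo_mem_nhdsGT one_pos) fun t ht => ?_)
  have hconv := (hF γ d hγ).2 (left_mem_Icc.2 hd) (right_mem_Icc.2 hd) (sub_pos.2 ht.2).le
    ht.1.le (sub_add_cancel 1 t)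
  simp only [smul_eq_mul, mul_zero, zero_add, hγp, hγz] at hconv
  have hmin := hp (γ (t * d))
  have hscaled : t * (F p + (1 - t) * d ^ 2 / 2) ≤ t * F z := by nlinarith
  exact le_of_mul_le_mul_left hscaled ht.1

end OneConvex

section BarycentricMap

variable {X ι : Type*} [MetricSpace X] [Fintype ι]

def IsBarycentricMap (f : ι → X → ℝ) (σ : (ι → ℝ) → X) : Prop :=
  ∀ x ∈ stdSimplex ℝ ι, ∀ y, ∑ i, x i * f i (σ x) ≤ ∑ i, x i * f i y

variable {f : ι → X → ℝ} {σ : (ι → ℝ) → X} {x y : ι → ℝ}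

theorem IsBarycentricMap.sq_dist_le (hσ : IsBarycentricMap f σ) (hgeo : GeodesicSpace X)
    (hf : ∀ i, OneConvex (f i)) (hx : x ∈ stdSimplex ℝ ι) (hy : y ∈ stdSimplex ℝ ι) :
    dist (σ x) (σ y) ^ 2 ≤ ∑ i, (x i - y i) * (f i (σ y) - f i (σ x)) := by
  have hxy := (oneConvex_sum_mul hf hx).add_sq_dist_div_two_le hgeo (hσ x hx) (σ y)
  have hyx := (oneConvex_sum_mul hf hy).add_sq_dist_div_two_le hgeo (hσ y hy) (σ x)
  rw [dist_comm] at hyx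
  simp only [sub_mul, mul_sub, sum_sub_distrib]
  linarith

/-- `σ x` is already optimal for the part `s • x` of the weights `y`, so only the remaining
weights `y - s • x` can pull `σ y` away from it. -/
theorem IsBarycentricMap.sq_dist_le_of_mul_le (hσ : IsBarycentricMap f σ)
    (hgeo : GeodesicSpace X) (hf : ∀ i, OneConvex (f i)) {c : ι → ℝ} (hc : ∀ i z, c i ≤ f i z)
    (hx : x ∈ stdSimplex ℝ ι) (hy : y ∈ stdSimplex ℝ ι) {s : ℝ} (hs : 0 ≤ s)
    (hsxy : ∀ i, s * x i ≤ y i) :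
    dist (σ y) (σ x) ^ 2 ≤ 2 * ∑ i, (y i - s * x i) * (f i (σ x) - c i) := by
  have hyx := (oneConvex_sum_mul hf hy).add_sq_dist_div_two_le hgeo (hσ y hy) (σ x)
  have hxy := mul_le_mul_of_nonneg_left (hσ x hx (σ y)) hs
  have hcy : ∑ i, (y i - s * x i) * c i ≤ ∑ i, (y i - s * x i) * f i (σ y) :=
    sum_le_sum fun i _ => mul_le_mul_of_nonneg_left (hc i _) (sub_nonneg.2 (hsxy i))
  rw [mul_sum, mul_sum] at hxy
  simp only [sub_mul, mul_sub, sum_sub_distrib, mul_assoc] at hcy ⊢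
  linarith

theorem IsBarycentricMap.continuousOn (hσ : IsBarycentricMap f σ) (hgeo : GeodesicSpace X)
    (hf : ∀ i, OneConvex (f i)) (hbdd : ∀ i, BddBelow (range (f i))) :
    ContinuousOn σ (stdSimplex ℝ ι) := by
  choose c hc using hbdd
  replace hc : ∀ i z, c i ≤ f i z := fun i z => hc i (mem_range_self z)
  intro x hx
  set M := ∑ i, (f i (σ x) - c i)
  have hbound : ∀ s ∈ Ioo (0 : ℝ) 1, ∀ᶠ y in 𝓝[stdSimplex ℝ ι] x,
      dist (σ y) (σ x) ^ 2 ≤ 2 * ((1 - s) * M) := by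
    intro s hs
    filter_upwards [self_mem_nhdsWithin, eventually_mul_le_nhdsWithin_stdSimplex hx.1 hs.2]
      with y hy hsxy
    refine (hσ.sq_dist_le_of_mul_le hgeo hf hc hx hy hs.1.le hsxy).trans ?_
    calc 2 * ∑ i, (y i - s * x i) * (f i (σ x) - c i)
        ≤ 2 * ∑ i, (1 - s) * (f i (σ x) - c i) := by
          gcongr 2 * ∑ i, ?_ * _ with i
          · exact sub_nonneg.2 (hc i _)
          calc y i - s * x i ≤ ∑ j, (y j - s * x j) :=
                single_le_sum (fun j _ => sub_nonneg.2 (hsxy j)) (mem_univ i)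
            _ = 1 - s := by rw [sum_sub_distrib, ← mul_sum, hy.2, hx.2, mul_one]
      _ = 2 * ((1 - s) * M) := by rw [← mul_sum]
  have hlim : Tendsto (fun s : ℝ => 2 * ((1 - s) * M)) (𝓝[<] 1) (𝓝 0) :=
    (Continuous.tendsto' (by fun_prop) 1 0 (by simp)).mono_left nhdsWithin_le_nhds
  refine Metric.tendsto_nhds.2 fun ε hε => ?_
  obtain ⟨s, hs, hsε⟩ := (eventually_mem_set.2 (Ioo_mem_nhdsLT zero_lt_one)).and
    (hlim.eventually (gt_mem_nhds (pow_pos hε 2))) |>.exists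
  filter_upwards [hbound s hs] with y hy
  exact lt_of_pow_lt_pow_left₀ 2 hε.le (hy.trans_lt hsε)

theorem IsBarycentricMap.dist_le_mul_sum_abs_sub (hσ : IsBarycentricMap f σ)
    (hgeo : GeodesicSpace X) (hf : ∀ i, OneConvex (f i)) {K : NNReal} {U : Set X}
    (hfU : ∀ i, LipschitzOnWith K (f i) U) (hx : x ∈ stdSimplex ℝ ι)
    (hy : y ∈ stdSimplex ℝ ι) (hxU : σ x ∈ U) (hyU : σ y ∈ U) :
    dist (σ x) (σ y) ≤ K * ∑ i, |x i - y i| := by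
  set d := dist (σ x) (σ y)
  have hd : 0 ≤ d := dist_nonneg
  have hsq : d ^ 2 ≤ K * (∑ i, |x i - y i|) * d := calc
    d ^ 2 ≤ ∑ i, (x i - y i) * (f i (σ y) - f i (σ x)) := hσ.sq_dist_le hgeo hf hx hy
    _ ≤ ∑ i, |x i - y i| * (K * d) := sum_le_sum fun i _ => by
      have hLip := (hfU i).dist_le_mul (σ y) hyU (σ x) hxU
      rw [Real.dist_eq, dist_comm] at hLip
      calc (x i - y i) * (f i (σ y) - f i (σ x))
          ≤ |x i - y i| * |f i (σ y) - f i (σ x)| := (le_abs_self _).trans (abs_mul _ _).le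
        _ ≤ |x i - y i| * (K * d) := mul_le_mul_of_nonneg_left hLip (abs_nonneg _)
    _ = K * (∑ i, |x i - y i|) * d := by rw [← sum_mul]; ring
  have hA : 0 ≤ (K : ℝ) * ∑ i, |x i - y i| := by positivity
  nlinarith

theorem IsBarycentricMap.locallyLipschitzOn (hσ : IsBarycentricMap f σ) (hgeo : GeodesicSpace X)
    (hf : ∀ i, OneConvex (f i)) (hlip : ∀ i, LocallyLipschitz (f i))
    (hcont : ContinuousOn σ (stdSimplex ℝ ι)) :
    LocallyLipschitzOn (stdSimplex ℝ ι) σ := by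
  intro x hx
  obtain ⟨K, U, hU, hfU⟩ := exists_mem_nhds_forall_lipschitzOnWith hlip (σ x)
  refine ⟨K * Fintype.card ι, stdSimplex ℝ ι ∩ σ ⁻¹' U,
    inter_mem self_mem_nhdsWithin (hcont x hx hU),
    LipschitzOnWith.of_dist_le_mul fun y hy z hz => ?_⟩
  have hsum : ∑ i, |y i - z i| ≤ Fintype.card ι * dist y z := by
    refine (sum_le_card_nsmul univ _ _ fun i _ => ?_).trans_eq (by rw [card_univ, nsmul_eq_mul])
    exact Real.dist_eq (y i) (z i) ▸ dist_le_pi_dist y z i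
  calc dist (σ y) (σ z) ≤ K * ∑ i, |y i - z i| :=
        hσ.dist_le_mul_sum_abs_sub hgeo hf hfU hy.1 hz.1 hy.2 hz.2
    _ ≤ K * (Fintype.card ι * dist y z) := by gcongr
    _ = ↑(K * Fintype.card ι) * dist y z := by push_cast; ring

end BarycentricMap

theorem barycentric_simplex_lipschitz_general {X : Type*} [MetricSpace X]
    (hgeo : GeodesicSpace X) (k : ℕ) (f : Fin (k + 1) → X → ℝ)
    (hconv : ∀ i, OneConvex (f i)) (hlip : ∀ i, LocallyLipschitz (f i))
    (σ : (Fin (k + 1) → ℝ) → X)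
    (hσ : ∀ x ∈ stdSimplex ℝ (Fin (k + 1)), ∀ y : X,
      ∑ i, x i * f i (σ x) ≤ ∑ i, x i * f i y) :
    ∃ K : NNReal, LipschitzOnWith K σ (stdSimplex ℝ (Fin (k + 1))) := by
  have hbary : IsBarycentricMap f σ := hσ
  have hbdd : ∀ i, BddBelow (range (f i)) := fun i =>
    ⟨f i (σ (Pi.single i 1)), forall_mem_range.2 fun z => by
      simpa [Pi.single_apply] using hσ _ (single_mem_stdSimplex ℝ i) z⟩
  have hcont := hbary.continuousOn hgeo hconv hbdd
  exact (hbary.locallyLipschitzOn hgeo hconv hlip hcont).exists_lipschitzOnWith_of_compact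
    (isCompact_stdSimplex ℝ _)

theorem barycentric_simplex_lipschitz {X : Type*} [MetricSpace X] [CompleteSpace X]
    (hgeo : GeodesicSpace X) (k : ℕ) (f : Fin (k + 1) → X → ℝ)
    (hconv : ∀ i, OneConvex (f i)) (hlip : ∀ i, LocallyLipschitz (f i))
    (σ : (Fin (k + 1) → ℝ) → X)
    (hσ : ∀ x ∈ stdSimplex ℝ (Fin (k + 1)), ∀ y : X,
      ∑ i, x i * f i (σ x) ≤ ∑ i, x i * f i y) :
    ∃ K : NNReal, LipschitzOnWith K σ (stdSimplex ℝ (Fin (k + 1))) :=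
  barycentric_simplex_lipschitz_general hgeo k f hconv hlip σ hσ
end

section
/- Let X be a complete geodesic space, f⁰,…,fᵏ : X → ℝ 1-convex locally Lipschitz functions. For v ∈ ℝ^{k+1} let h_v(p) = maxᵢ (fⁱ(p) − vⁱ) and φ(v) = argmin h_v. Then for all v, w ∈ ℝ^{k+1}, dist(φ(v), φ(w))² ≤ 2·‖v − w‖_∞. In particular φ is Hölder continuous with exponent 1/2. -/
open Set Metric Finset

lemma sup_min_est {X : Type*} [MetricSpace X] (hgeo : GeodesicSpace X) {k : ℕ}
    (f : Fin (k + 1) → X → ℝ) (hconv : ∀ i, OneConvex (f i)) (v : Fin (k + 1) → ℝ)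
    (p q : X) (hmin : ∀ x : X, (⨆ i, (f i p - v i)) ≤ ⨆ i, (f i x - v i)) :
    (⨆ i, (f i p - v i)) + dist p q ^ 2 / 2 ≤ ⨆ i, (f i q - v i) := by
  set H : X → ℝ := fun x => ⨆ i, (f i x - v i) with hH
  rcases (eq_or_lt_of_le (dist_nonneg (x := p) (y := q))) with h0 | hL
  · rw [← h0]
    simpa using hmin q
  · set L := dist p q with hLdef
    obtain ⟨γ, hγ0, hγL, hγ⟩ := hgeo p q
    refine le_of_forall_pos_le_add (fun ε hε => ?_)
    set s : ℝ := min 1 (2 * ε / L ^ 2) with hs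
    have hs0 : 0 < s := lt_min one_pos (by positivity)
    have hs1 : s ≤ 1 := min_le_left _ _
    have hsε : s * L ^ 2 / 2 ≤ ε := by
      have : s ≤ 2 * ε / L ^ 2 := min_le_right _ _
      have hL2 : 0 < L ^ 2 := by positivity
      calc s * L ^ 2 / 2 ≤ (2 * ε / L ^ 2) * L ^ 2 / 2 := by gcongr
        _ = ε := by field_simp
    set t : ℝ := s * L with ht
    have key : ∀ i, f i (γ t) - v i ≤ t ^ 2 / 2 + ((1 - s) * H p + s * (H q - L ^ 2 / 2)) := by
      intro i
      have hc := (hconv i γ L hγ).2 (show (0:ℝ) ∈ Icc 0 L from ⟨le_refl _, hL.le⟩)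
        (show L ∈ Icc 0 L from ⟨hL.le, le_refl _⟩)
        (by linarith : (0:ℝ) ≤ 1 - s) hs0.le (by ring)
      simp only [smul_eq_mul, mul_zero, zero_add] at hc
      have hp : f i p - v i ≤ H p :=
        le_ciSup (f := fun j => f j p - v j) (Set.Finite.bddAbove (Set.finite_range _)) i
      have hq : f i q - v i ≤ H q :=
        le_ciSup (f := fun j => f j q - v j) (Set.Finite.bddAbove (Set.finite_range _)) i
      rw [hγ0] at hc
      rw [hγL] at hc
      rw [ht]
      nlinarith [hc, hp, hq]
    have hHt : H (γ t) ≤ t ^ 2 / 2 + ((1 - s) * H p + s * (H q - L ^ 2 / 2)) := ciSup_le key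
    have hm := hmin (γ t)
    have ht2 : t ^ 2 = s ^ 2 * L ^ 2 := by ring
    nlinarith [mul_le_mul_of_nonneg_left hsε hs0.le, hs0, hm, hHt]

theorem barycentric_inverse_holder {X : Type*} [MetricSpace X] [CompleteSpace X]
    (hgeo : GeodesicSpace X) (k : ℕ) (f : Fin (k + 1) → X → ℝ)
    (hconv : ∀ i, OneConvex (f i)) (hlip : ∀ i, LocallyLipschitz (f i))
    (φ : (Fin (k + 1) → ℝ) → X)
    (hφ : ∀ v : Fin (k + 1) → ℝ, ∀ p : X,
      (⨆ i, (f i (φ v) - v i)) ≤ ⨆ i, (f i p - v i)) :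
    ∀ v w : Fin (k + 1) → ℝ, dist (φ v) (φ w) ^ 2 ≤ 2 * ‖v - w‖ := by
  intro v w
  have h1 := sup_min_est hgeo f hconv v (φ v) (φ w) (hφ v)
  have h2 := sup_min_est hgeo f hconv w (φ w) (φ v) (hφ w)
  rw [dist_comm (φ w) (φ v)] at h2
  have hb : ∀ i : Fin (k+1), |v i - w i| ≤ ‖v - w‖ := by
    intro i
    have := norm_le_pi_norm (v - w) i
    simpa [Real.norm_eq_abs] using this
  have hvw : ∀ x : X, (⨆ i, (f i x - v i)) ≤ (⨆ i, (f i x - w i)) + ‖v - w‖ := by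
    intro x
    refine ciSup_le (fun i => ?_)
    have h1 : f i x - w i ≤ ⨆ j, (f j x - w j) :=
      le_ciSup (f := fun j => f j x - w j) (Set.Finite.bddAbove (Set.finite_range _)) i
    have h2 := hb i
    have := abs_le.mp h2
    linarith [this.1, this.2]
  have hwv : ∀ x : X, (⨆ i, (f i x - w i)) ≤ (⨆ i, (f i x - v i)) + ‖v - w‖ := by
    intro x
    refine ciSup_le (fun i => ?_)
    have h1 : f i x - v i ≤ ⨆ j, (f j x - v j) :=
      le_ciSup (f := fun j => f j x - v j) (Set.Finite.bddAbove (Set.finite_range _)) i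
    have h2 := hb i
    have := abs_le.mp h2
    linarith [this.1, this.2]
  have a1 := hvw (φ w)
  have a2 := hwv (φ v)
  linarith [h1, h2, a1, a2]
end

section
/- Let X be a geodesic space and f : X → ℝ a 1-convex function attaining minima: if p minimizes f_x = Σᵢ xᵢ fⁱ and q minimizes f_y = Σᵢ yᵢ fⁱ, where each fⁱ is 1-convex and L-Lipschitz on a set containing the geodesic [pq], and x, y lie in the standard simplex, then dist(p, q) ≤ L·‖x − y‖₁. -/
open Set Metric Finset

/-!
Along the geodesic `γ` from `p` to `q`, the function `t ↦ fₓ (γ t)` is 1-convex with its minimum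
at `t = 0`, so it grows by at least `d² / 2` between the endpoints, where `d = dist p q`;
symmetrically `f_y` grows by `d² / 2` from `q` back to `p`. Adding the two bounds gives
`d² ≤ ∑ᵢ (xᵢ - yᵢ) (fⁱ q - fⁱ p) ≤ L d ‖x - y‖₁`.
-/

theorem ConvexOn.finset_sum {ι : Type*} {s : Set ℝ} (hs : Convex ℝ s) (t : Finset ι)
    {g : ι → ℝ → ℝ} (hg : ∀ i ∈ t, ConvexOn ℝ s (g i)) :
    ConvexOn ℝ s (fun z => ∑ i ∈ t, g i z) := by
  classical
  induction t using Finset.induction with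
  | empty => simpa using convexOn_const 0 hs
  | insert a u ha ih =>
    simp only [Finset.sum_insert ha]
    exact (hg a (mem_insert_self a u)).add (ih fun i hi => hg i (mem_insert_of_mem hi))

theorem sq_div_two_le_sub_of_convexOn_sub_sq {g : ℝ → ℝ} {d : ℝ} (hd : 0 < d)
    (hg : ConvexOn ℝ (Icc 0 d) (fun t => g t - t ^ 2 / 2))
    (hmin : ∀ t ∈ Icc 0 d, g 0 ≤ g t) :
    d ^ 2 / 2 ≤ g d - g 0 := by
  set slope := (g d - d ^ 2 / 2 - g 0) / d
  -- the secant slopes of `g t - t² / 2` at `0` are at least `-t / 2` and increase with `t`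
  have hslope : ∀ t ∈ Ioo 0 d, -t / 2 ≤ slope := by
    intro t ht
    have hsec := hg.secant_mono_aux2 (left_mem_Icc.2 hd.le) (right_mem_Icc.2 hd.le) ht.1 ht.2
    have hgt := hmin t (Ioo_subset_Icc_self ht)
    calc -t / 2 ≤ (g t - t ^ 2 / 2 - g 0) / t := by
          rw [le_div_iff₀ ht.1]; linarith
      _ ≤ slope := by simpa using hsec
  have hlim : Filter.Tendsto (fun t : ℝ => -t / 2) (nhdsWithin 0 (Ioi 0)) (nhds 0) := by
    have hcont : Continuous fun t : ℝ => -t / 2 := continuous_neg.div_const 2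
    simpa using (hcont.tendsto 0).mono_left nhdsWithin_le_nhds
  have hslope_nonneg : 0 ≤ slope :=
    le_of_tendsto hlim (Filter.eventually_of_mem (Ioo_mem_nhdsGT hd) hslope)
  linarith [(le_div_iff₀ hd).1 hslope_nonneg]

theorem UnitSpeedOn.comp_sub {X : Type*} [MetricSpace X] {γ : ℝ → X} {L : ℝ}
    (hγ : UnitSpeedOn γ L) : UnitSpeedOn (fun t => γ (L - t)) L := by
  intro s hs t ht
  rw [hγ (L - s) ⟨by linarith [hs.2], by linarith [hs.1]⟩ (L - t)
    ⟨by linarith [ht.2], by linarith [ht.1]⟩, ← abs_neg]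
  ring_nf

theorem OneConvex.weighted_sum {X : Type*} [MetricSpace X] {ι : Type*} [Fintype ι]
    {f : ι → X → ℝ} (hf : ∀ i, OneConvex (f i)) {w : ι → ℝ} (hw : w ∈ stdSimplex ℝ ι) :
    OneConvex (fun z => ∑ i, w i * f i z) := by
  intro γ L hγ
  have hsum : (fun t => (∑ i, w i * f i (γ t)) - t ^ 2 / 2)
      = fun t => ∑ i, w i * (f i (γ t) - t ^ 2 / 2) := by
    funext t
    simp only [mul_sub, Finset.sum_sub_distrib, ← Finset.sum_mul, hw.2, one_mul]
  rw [hsum]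
  exact ConvexOn.finset_sum (convex_Icc 0 L) _ fun i _ => (hf i γ L hγ).smul (hw.1 i)

theorem OneConvex.sq_dist_div_two_le {X : Type*} [MetricSpace X] {g : X → ℝ} (hg : OneConvex g)
    {p q : X} (hp : ∀ z, g p ≤ g z) {γ : ℝ → X} (hγ0 : γ 0 = p) (hγd : γ (dist p q) = q)
    (hγ : UnitSpeedOn γ (dist p q)) :
    dist p q ^ 2 / 2 ≤ g q - g p := by
  rcases (dist_nonneg : 0 ≤ dist p q).eq_or_lt with hpq | hpq
  · simp [dist_eq_zero.1 hpq.symm]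
  have := sq_div_two_le_sub_of_convexOn_sub_sq hpq (hg γ _ hγ) fun t _ => by
    simpa [hγ0] using hp (γ t)
  simpa [hγ0, hγd] using this

theorem sum_mul_sub_le_of_lipschitzOnWith {X : Type*} [MetricSpace X] {ι : Type*} [Fintype ι]
    {f : ι → X → ℝ} {L : NNReal} {s : Set X} (hf : ∀ i, LipschitzOnWith L (f i) s)
    {p q : X} (hp : p ∈ s) (hq : q ∈ s) (w : ι → ℝ) :
    ∑ i, w i * (f i q - f i p) ≤ L * dist p q * ∑ i, |w i| := by
  rw [Finset.mul_sum]
  refine Finset.sum_le_sum fun i _ => ?_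
  have hlip := (hf i).dist_le_mul q hq p hp
  rw [Real.dist_eq, dist_comm] at hlip
  calc w i * (f i q - f i p) ≤ |w i| * |f i q - f i p| := by
        rw [← abs_mul]; exact le_abs_self _
    _ ≤ |w i| * (L * dist p q) := by gcongr
    _ = L * dist p q * |w i| := by ring

theorem barycentric_lipschitz_estimate_general {X : Type*} [MetricSpace X]
    (k : ℕ) (f : Fin (k + 1) → X → ℝ)
    (hconv : ∀ i, OneConvex (f i)) (L : NNReal)
    (x y : Fin (k + 1) → ℝ)
    (hx : x ∈ stdSimplex ℝ (Fin (k + 1))) (hy : y ∈ stdSimplex ℝ (Fin (k + 1)))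
    (p q : X)
    (hp : ∀ z : X, ∑ i, x i * f i p ≤ ∑ i, x i * f i z)
    (hq : ∀ z : X, ∑ i, y i * f i q ≤ ∑ i, y i * f i z)
    (hLip : ∃ γ : ℝ → X, γ 0 = p ∧ γ (dist p q) = q ∧ UnitSpeedOn γ (dist p q) ∧
      ∀ i, LipschitzOnWith L (f i) (γ '' Set.Icc 0 (dist p q))) :
    dist p q ≤ L * ∑ i, |x i - y i| := by
  obtain ⟨γ, hγ0, hγd, hγ, hlip⟩ := hLip
  have hpq := (OneConvex.weighted_sum hconv hx).sq_dist_div_two_le hp hγ0 hγd hγ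
  have hqp := (OneConvex.weighted_sum hconv hy).sq_dist_div_two_le hq (q := p)
    (γ := fun t => γ (dist p q - t)) (by simpa [dist_comm] using hγd)
    (by simpa [dist_comm] using hγ0) (by simpa [dist_comm] using hγ.comp_sub)
  have hbound := sum_mul_sub_le_of_lipschitzOnWith hlip
    ⟨0, left_mem_Icc.2 dist_nonneg, hγ0⟩ ⟨_, right_mem_Icc.2 dist_nonneg, hγd⟩ (x - y)
  simp only [Pi.sub_apply, sub_mul, mul_sub, Finset.sum_sub_distrib, dist_comm q p] at hbound hqp
  have hsq : dist p q * dist p q ≤ dist p q * (L * ∑ i, |x i - y i|) := by linarith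
  rcases (dist_nonneg : 0 ≤ dist p q).eq_or_lt with hzero | hpos
  · rw [← hzero]; positivity
  · exact le_of_mul_le_mul_left hsq hpos

theorem barycentric_lipschitz_estimate {X : Type*} [MetricSpace X]
    (hgeo : GeodesicSpace X) (k : ℕ) (f : Fin (k + 1) → X → ℝ)
    (hconv : ∀ i, OneConvex (f i)) (L : NNReal)
    (x y : Fin (k + 1) → ℝ)
    (hx : x ∈ stdSimplex ℝ (Fin (k + 1))) (hy : y ∈ stdSimplex ℝ (Fin (k + 1)))
    (p q : X)
    (hp : ∀ z : X, ∑ i, x i * f i p ≤ ∑ i, x i * f i z)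
    (hq : ∀ z : X, ∑ i, y i * f i q ≤ ∑ i, y i * f i z)
    (hLip : ∃ γ : ℝ → X, γ 0 = p ∧ γ (dist p q) = q ∧ UnitSpeedOn γ (dist p q) ∧
      ∀ i, LipschitzOnWith L (f i) (γ '' Set.Icc 0 (dist p q))) :
    dist p q ≤ L * ∑ i, |x i - y i| :=
  barycentric_lipschitz_estimate_general k f hconv L x y hx hy p q hp hq hLip
end
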